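/- arXiv:1709.00779 — 8 statements merged into one kernel-verified Lean document; each statement's English description precedes it below -/
import Mathlib

section
/- Let α_L > 0, α_N > 2, and C_L, C_N, R_c, W, Γ, P, λ > 0, and let M be a positive integer. Define the dual-slope path loss function l(r) = C_L r^{α_L} for 0 ≤ r < R_c and l(r) = C_N r^{α_N} for r ≥ R_c. Then the series ∑_{j=0}^{∞} ( ∫_0^∞ (1 − exp(−WΓ l(r)/(PM)))^j · (2λπ r/M) · exp(−λπ r²/M) dr )^M diverges, i.e., its value in [0,∞] is +∞. -/
open MeasureTheory
open scoped ENNReal Real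

/-!
The `j`-th term is the `M`-th power of the probability that a user fails `j` cycles in a row.
With `c = WΓC_N / (PM)`, beyond the radius `ρⱼ = R_c + (log (2j) / c) ^ (1 / α_N)` a single cycle
fails with probability at least `1 - 1 / (2j)`, so by Bernoulli's inequality `j` failures have
probability at least `1 / 2`, and the shell `ρⱼ < r < ρⱼ + 1` alone contributes at least a constant
times `exp (-λπ (ρⱼ + 1)² / M)` to the integral. Since `α_N > 2`, `ρⱼ²` grows like
`(log j) ^ (2 / α_N) = o (log j)`, so the `j`-th term eventually exceeds `1 / j` and the series
diverges like the harmonic series.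
-/

open Filter Set Asymptotics

theorem ENNReal.tsum_eq_top_of_eventually_one_div_le {u : ℕ → ℝ≥0∞}
    (h : ∀ᶠ j : ℕ in atTop, ENNReal.ofReal (1 / (j : ℝ)) ≤ u j) : ∑' j, u j = ⊤ := by
  by_contra hu
  refine Real.not_summable_one_div_natCast <|
    (ENNReal.summable_toReal hu).of_norm_bounded_eventually_nat ?_
  filter_upwards [h] with j hj
  rw [Real.norm_of_nonneg (by positivity)]
  exact (ENNReal.ofReal_le_iff_le_toReal (ENNReal.ne_top_of_tsum_ne_top hu j)).1 hj

theorem half_le_one_sub_exp_neg_pow {x : ℝ} {n : ℕ} (hn : 0 < n) (hx : Real.log (2 * n) ≤ x) :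
    1 / 2 ≤ (1 - Real.exp (-x)) ^ n := by
  have hn1 : (1 : ℝ) ≤ n := by exact_mod_cast hn
  have hexp : Real.exp (-x) ≤ 1 / (2 * n) :=
    calc Real.exp (-x) ≤ Real.exp (-Real.log (2 * n)) := Real.exp_le_exp.2 (neg_le_neg hx)
      _ = 1 / (2 * n) := by rw [Real.exp_neg, Real.exp_log (by positivity), one_div]
  have hsmall : 1 / (2 * n) ≤ (1 / 2 : ℝ) := by gcongr; linarith
  calc (1 / 2 : ℝ) = 1 + n * -(1 / (2 * n)) := by field_simp; ring
    _ ≤ (1 + -(1 / (2 * n))) ^ n := one_add_mul_le_pow (by linarith) n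
    _ ≤ (1 - Real.exp (-x)) ^ n := pow_le_pow_left₀ (by linarith) (by linarith) n

theorem le_mul_rpow_of_rpow_div_le {c α y r : ℝ} (hc : 0 < c) (hα : 0 < α) (hy : 0 ≤ y)
    (hr : (y / c) ^ (1 / α) ≤ r) : y ≤ c * r ^ α := by
  have hyc : 0 ≤ y / c := div_nonneg hy hc.le
  calc y = c * ((y / c) ^ (1 / α)) ^ α := by
        rw [← Real.rpow_mul hyc, one_div_mul_cancel hα.ne', Real.rpow_one]; field_simp
    _ ≤ c * r ^ α := by gcongr

theorem ofReal_le_lintegral_Ioi_of_le_on_Ioo {f : ℝ → ℝ} {a b : ℝ} (ha : 0 ≤ a)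
    (h : ∀ r ∈ Ioo a (a + 1), b ≤ f r) :
    ENNReal.ofReal b ≤ ∫⁻ r in Ioi 0, ENNReal.ofReal (f r) :=
  calc ENNReal.ofReal b = ∫⁻ _ in Ioo a (a + 1), ENNReal.ofReal b := by simp [Real.volume_Ioo]
    _ ≤ ∫⁻ r in Ioo a (a + 1), ENNReal.ofReal (f r) :=
        setLIntegral_mono' measurableSet_Ioo fun r hr => ENNReal.ofReal_le_ofReal (h r hr)
    _ ≤ ∫⁻ r in Ioi 0, ENNReal.ofReal (f r) := lintegral_mono_set fun _ hr => ha.trans_lt hr.1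

noncomputable def outageRadius (c α R : ℝ) (j : ℕ) : ℝ := R + (Real.log (2 * j) / c) ^ (1 / α)

theorem ofReal_le_lintegral_one_sub_exp_pow_mul_rayleigh {g : ℝ → ℝ} {c α s R : ℝ}
    (hc : 0 < c) (hα : 0 < α) (hs : 0 < s) (hR : 0 < R) (hg : ∀ r, R ≤ r → g r = c * r ^ α) {j : ℕ} (hj : 0 < j) :
    ENNReal.ofReal (s * R * Real.exp (-(s * (outageRadius c α R j + 1) ^ 2))) ≤
      ∫⁻ r in Ioi 0, ENNReal.ofReal
        ((1 - Real.exp (-g r)) ^ j * (2 * s * r) * Real.exp (-(s * r ^ 2))) := by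
  set ρ := outageRadius c α R j
  have hj1 : (1 : ℝ) ≤ j := by exact_mod_cast hj
  have hlog : 0 ≤ Real.log (2 * j) := Real.log_nonneg (by linarith)
  have hvρ : (Real.log (2 * j) / c) ^ (1 / α) ≤ ρ := le_add_of_nonneg_left hR.le
  have hRρ : R ≤ ρ := le_add_of_nonneg_right (by positivity)
  refine ofReal_le_lintegral_Ioi_of_le_on_Ioo (hR.le.trans hRρ) ?_
  rintro r ⟨hρr, hr⟩
  have hRr : R ≤ r := hRρ.trans hρr.le
  have hr0 : 0 ≤ r := hR.le.trans hRr
  have hfail : 1 / 2 ≤ (1 - Real.exp (-g r)) ^ j := by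
    rw [hg r hRr]
    exact half_le_one_sub_exp_neg_pow hj
      (le_mul_rpow_of_rpow_div_le hc hα hlog (hvρ.trans hρr.le))
  have hdens : R * Real.exp (-(s * (ρ + 1) ^ 2)) ≤ r * Real.exp (-(s * r ^ 2)) := by
    gcongr
  calc s * R * Real.exp (-(s * (ρ + 1) ^ 2))
        = 1 / 2 * (2 * s) * (R * Real.exp (-(s * (ρ + 1) ^ 2))) := by ring
    _ ≤ (1 - Real.exp (-g r)) ^ j * (2 * s) * (r * Real.exp (-(s * r ^ 2))) := by gcongr
    _ = (1 - Real.exp (-g r)) ^ j * (2 * s * r) * Real.exp (-(s * r ^ 2)) := by ring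

theorem eventually_add_mul_rpow_le_self {β : ℝ} (hβ : β < 1) (a b : ℝ) :
    ∀ᶠ u in atTop, a + b * u ^ β ≤ u := by
  have hpow : (fun u : ℝ => u ^ β) =o[atTop] id := by
    refine (isLittleO_iff_tendsto' ((eventually_gt_atTop 0).mono
      fun u hu h => absurd h hu.ne')).2 ?_
    refine (tendsto_rpow_neg_atTop (sub_pos.2 hβ)).congr' ?_
    filter_upwards [eventually_gt_atTop 0] with u hu
    rw [neg_sub, Real.rpow_sub_one hu.ne']
  filter_upwards [((isLittleO_const_id_atTop a).add (hpow.const_mul_left b)).def one_pos,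
    eventually_ge_atTop 0] with u hu hu0
  simpa [abs_of_nonneg hu0] using (le_abs_self _).trans hu

theorem eventually_add_mul_sq_le_self {c α : ℝ} (hc : 0 < c) (hα : 2 < α) (a b R : ℝ)
    (hb : 0 ≤ b) : ∀ᶠ u in atTop, a + b * (R + (u / c) ^ (1 / α) + 1) ^ 2 ≤ u := by
  have hβ : 2 / α < 1 := (div_lt_one (by linarith)).2 hα
  filter_upwards [eventually_add_mul_rpow_le_self hβ (a + 2 * b * (R + 1) ^ 2)
    (2 * b * c ^ (-(2 / α))), eventually_ge_atTop 0] with u hu hu0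
  set v := (u / c) ^ (1 / α)
  have hv : v ^ 2 = c ^ (-(2 / α)) * u ^ (2 / α) := by
    rw [← Real.rpow_natCast, ← Real.rpow_mul (by positivity), Real.div_rpow hu0 hc.le,
      Real.rpow_neg hc.le]
    push_cast
    field_simp
  calc a + b * (R + v + 1) ^ 2 ≤ a + b * (2 * (R + 1) ^ 2 + 2 * v ^ 2) := by
        gcongr; nlinarith [sq_nonneg (R + 1 - v)]
    _ = a + 2 * b * (R + 1) ^ 2 + 2 * b * c ^ (-(2 / α)) * u ^ (2 / α) := by rw [hv]; ring
    _ ≤ u := hu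

theorem one_div_le_mul_exp_neg_pow {K q : ℝ} {j M : ℕ} (hK : 0 < K) (hj : 0 < j)
    (h : Real.log 2 - M * Real.log K + M * q ≤ Real.log (2 * j)) :
    1 / (j : ℝ) ≤ (K * Real.exp (-q)) ^ M := by
  have hj' : (0 : ℝ) < j := by exact_mod_cast hj
  calc 1 / (j : ℝ) = Real.exp (Real.log 2 - Real.log (2 * j)) := by
        rw [Real.exp_sub, Real.exp_log two_pos, Real.exp_log (by positivity)]; field_simp
    _ ≤ Real.exp (M * (Real.log K - q)) := Real.exp_le_exp.2 (by linarith)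
    _ = (K * Real.exp (-q)) ^ M := by
        rw [Real.exp_nat_mul, Real.exp_sub, Real.exp_log hK, Real.exp_neg, div_eq_mul_inv]

theorem stmt3_general (αN CN Rc W gam P lam : ℝ) (M : ℕ)
    (hαN : 2 < αN) (hCN : 0 < CN) (hRc : 0 < Rc)
    (hW : 0 < W) (hgam : 0 < gam) (hP : 0 < P) (hlam : 0 < lam) (hM : 0 < M)
    (l : ℝ → ℝ)
    (hl2 : ∀ r, Rc ≤ r → l r = CN * r ^ αN) :
    ∑' j : ℕ,
      (∫⁻ r in Set.Ioi (0:ℝ),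
        ENNReal.ofReal ((1 - Real.exp (-(W * gam * l r / (P * M)))) ^ j *
          (2 * lam * π * r / M) * Real.exp (-(lam * π * r ^ 2 / M)))) ^ M = ⊤ := by
  have hMR : (0 : ℝ) < M := by exact_mod_cast hM
  set c := W * gam * CN / (P * M)
  set s := lam * π / M with hs_def
  have hc : 0 < c := by positivity
  have hs : 0 < s := by positivity
  have hg : ∀ r, Rc ≤ r → W * gam * l r / (P * M) = c * r ^ αN := fun r hr => by
    rw [hl2 r hr]; ring
  have hlog : Tendsto (fun j : ℕ => Real.log (2 * j)) atTop atTop :=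
    Real.tendsto_log_atTop.comp (tendsto_natCast_atTop_atTop.const_mul_atTop two_pos)
  refine ENNReal.tsum_eq_top_of_eventually_one_div_le ?_
  filter_upwards [hlog.eventually (eventually_add_mul_sq_le_self hc hαN
    (Real.log 2 - M * Real.log (s * Rc)) (M * s) Rc (by positivity)),
    eventually_gt_atTop 0] with j hj hj0
  have hI := ofReal_le_lintegral_one_sub_exp_pow_mul_rayleigh hc (by linarith) hs hRc hg hj0
  calc ENNReal.ofReal (1 / j)
      ≤ ENNReal.ofReal (s * Rc * Real.exp (-(s * (outageRadius c αN Rc j + 1) ^ 2))) ^ M := by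
        rw [← ENNReal.ofReal_pow (by positivity)]
        refine ENNReal.ofReal_le_ofReal (one_div_le_mul_exp_neg_pow (by positivity) hj0 ?_)
        unfold outageRadius
        linarith
    _ ≤ _ := by
        gcongr
        refine hI.trans_eq (lintegral_congr fun r => ?_)
        rw [hs_def]
        ring_nf

/-- Theorem 3: in the noise-limited network with dual-slope path loss and NLOS exponent
`αN > 2`, the series giving the mean number of IA cycles to succeed in cell search diverges,
for every finite number of beams `M` and BS intensity `lam`. -/
theorem stmt3 (αL αN CL CN Rc W gam P lam : ℝ) (M : ℕ)
    (hαL : 0 < αL) (hαN : 2 < αN) (hCL : 0 < CL) (hCN : 0 < CN) (hRc : 0 < Rc)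
    (hW : 0 < W) (hgam : 0 < gam) (hP : 0 < P) (hlam : 0 < lam) (hM : 0 < M)
    (l : ℝ → ℝ)
    (hl1 : ∀ r, 0 ≤ r → r < Rc → l r = CL * r ^ αL)
    (hl2 : ∀ r, Rc ≤ r → l r = CN * r ^ αN) :
    ∑' j : ℕ,
      (∫⁻ r in Set.Ioi (0:ℝ),
        ENNReal.ofReal ((1 - Real.exp (-(W * gam * l r / (P * M)))) ^ j *
          (2 * lam * π * r / M) * Real.exp (-(lam * π * r ^ 2 / M)))) ^ M = ⊤ :=
  stmt3_general αN CN Rc W gam P lam M hαN hCN hRc hW hgam hP hlam hM l hl2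
end

section
/- Let l : [0,∞) → [0,∞) be a nondecreasing measurable function, let W, Γ, P > 0, and let M be a positive integer. For λ > 0 define S(λ) = ∑_{j=0}^{∞} ( ∫_0^∞ (1 − exp(−WΓ l(r)/(PM)))^j · (2λπ r/M) · exp(−λπ r²/M) dr )^M, valued in [0,∞]. Then S is nonincreasing in λ: for all 0 < λ₁ ≤ λ₂ one has S(λ₂) ≤ S(λ₁). -/
/-!
Substituting `u = √λ r` turns the `j`-th integral into
`∫ (1 - exp (-WΓ l(u/√λ)/(PM)))^j · (2πu/M) e^{-πu²/M} du`: the kernel no longer depends on `λ`,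
and the first factor decreases in `λ` because `l` is nondecreasing.
-/

open MeasureTheory Set
open scoped ENNReal Real

theorem setLIntegral_Ioi_ofReal_mul_comp_mul_left {c : ℝ} (hc : 0 < c) (h : ℝ → ℝ≥0∞) :
    ∫⁻ r in Ioi 0, ENNReal.ofReal c * h (c * r) = ∫⁻ u in Ioi 0, h u := by
  have hmul : MeasurableEmbedding (c * ·) := (Homeomorph.mulLeft₀ c hc.ne').measurableEmbedding
  have hmap :
      (volume.restrict (Ioi 0)).map (c * ·) = ENNReal.ofReal c⁻¹ • volume.restrict (Ioi 0) :=
    calc (volume.restrict (Ioi 0)).map (c * ·)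
        = (volume.restrict ((c * ·) ⁻¹' Ioi 0)).map (c * ·) := by
          rw [preimage_const_mul_Ioi₀ _ hc, zero_div]
      _ = ENNReal.ofReal c⁻¹ • volume.restrict (Ioi 0) := by
          rw [← Measure.restrict_map hmul.measurable measurableSet_Ioi,
            Real.map_volume_mul_left hc.ne', Measure.restrict_smul, abs_of_pos (inv_pos.2 hc)]
  rw [lintegral_const_mul' _ _ ENNReal.ofReal_ne_top, ← hmul.lintegral_map, hmap,
    lintegral_smul_measure, smul_eq_mul, ← mul_assoc, ← ENNReal.ofReal_mul hc.le,
    mul_inv_cancel₀ hc.ne', ENNReal.ofReal_one, one_mul]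

theorem setLIntegral_Ioi_mul_rescale_le {g : ℝ → ℝ≥0∞} (hg : MonotoneOn g (Ici 0))
    (ψ : ℝ → ℝ≥0∞) {c₁ c₂ : ℝ} (hc₁ : 0 < c₁) (hc : c₁ ≤ c₂) :
    ∫⁻ r in Ioi 0, g r * (ENNReal.ofReal c₂ * ψ (c₂ * r))
      ≤ ∫⁻ r in Ioi 0, g r * (ENNReal.ofReal c₁ * ψ (c₁ * r)) := by
  have rescale : ∀ c : ℝ, 0 < c →
      ∫⁻ r in Ioi 0, g r * (ENNReal.ofReal c * ψ (c * r)) = ∫⁻ u in Ioi 0, g (u / c) * ψ u := by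
    intro c hc
    rw [← setLIntegral_Ioi_ofReal_mul_comp_mul_left hc fun u => g (u / c) * ψ u]
    refine lintegral_congr fun r => ?_
    rw [mul_div_cancel_left₀ _ hc.ne', mul_left_comm]
  rw [rescale c₂ (hc₁.trans_le hc), rescale c₁ hc₁]
  refine setLIntegral_mono' measurableSet_Ioi fun u (hu : 0 < u) => ?_
  gcongr
  exact hg (div_nonneg hu.le (hc₁.trans_le hc).le) (div_nonneg hu.le hc₁.le)
    (div_le_div_of_nonneg_left hu.le hc₁ hc)

theorem two_mul_mul_exp_neg_sq_eq_sqrt_mul (a M r : ℝ) (ha : 0 ≤ a) :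
    2 * a * π * r / M * Real.exp (-(a * π * r ^ 2 / M))
      = √a * (2 * π * (√a * r) / M * Real.exp (-(π * (√a * r) ^ 2 / M))) := by
  have hsq := Real.mul_self_sqrt ha
  rw [mul_pow, Real.sq_sqrt ha, show π * (a * r ^ 2) / M = a * π * r ^ 2 / M by ring]
  linear_combination (-(2 * π * r / M * Real.exp (-(a * π * r ^ 2 / M)))) * hsq

theorem monotoneOn_one_sub_exp_neg_mul_div {l : ℝ → ℝ} {s : Set ℝ} (hl : MonotoneOn l s)
    {b d : ℝ} (hb : 0 ≤ b) (hd : 0 ≤ d) :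
    MonotoneOn (fun r => 1 - Real.exp (-(b * l r / d))) s := by
  intro r hr t ht hrt
  dsimp only
  gcongr
  exact hl hr ht hrt

theorem stmt4_general (W gam P : ℝ) (M : ℕ)
    (hW : 0 < W) (hgam : 0 < gam) (hP : 0 < P)
    (l : ℝ → ℝ) (hlmono : MonotoneOn l (Set.Ici (0:ℝ)))
    (hlnonneg : ∀ r, 0 ≤ r → 0 ≤ l r)
    (lam₁ lam₂ : ℝ) (hlam₁ : 0 < lam₁) (hlam₁₂ : lam₁ ≤ lam₂) :
    ∑' j : ℕ,
      (∫⁻ r in Set.Ioi (0:ℝ),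
        ENNReal.ofReal ((1 - Real.exp (-(W * gam * l r / (P * M)))) ^ j *
          (2 * lam₂ * π * r / M) * Real.exp (-(lam₂ * π * r ^ 2 / M)))) ^ M
    ≤ ∑' j : ℕ,
      (∫⁻ r in Set.Ioi (0:ℝ),
        ENNReal.ofReal ((1 - Real.exp (-(W * gam * l r / (P * M)))) ^ j *
          (2 * lam₁ * π * r / M) * Real.exp (-(lam₁ * π * r ^ 2 / M)))) ^ M := by
  set f : ℝ → ℝ := fun r => 1 - Real.exp (-(W * gam * l r / (P * M)))
  set ψ : ℝ → ℝ≥0∞ := fun u => ENNReal.ofReal (2 * π * u / M * Real.exp (-(π * u ^ 2 / M)))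
  have hf_mono : MonotoneOn f (Ici 0) :=
    monotoneOn_one_sub_exp_neg_mul_div hlmono (by positivity) (by positivity)
  have hf_nonneg : ∀ r ∈ Ici (0 : ℝ), 0 ≤ f r := fun r hr => by
    have := hlnonneg r hr
    exact sub_nonneg.2 (Real.exp_le_one_iff.2 (neg_nonpos.2 (by positivity)))
  have integrand_eq : ∀ (j : ℕ) (a : ℝ), 0 ≤ a → EqOn
      (fun r => ENNReal.ofReal (f r ^ j * (2 * a * π * r / M) * Real.exp (-(a * π * r ^ 2 / M))))
      (fun r => ENNReal.ofReal (f r ^ j) * (ENNReal.ofReal √a * ψ (√a * r))) (Ioi 0) :=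
    fun j a ha r (hr : 0 < r) => by
      dsimp only
      rw [mul_assoc (f r ^ j), two_mul_mul_exp_neg_sq_eq_sqrt_mul a M r ha,
        ENNReal.ofReal_mul' (by positivity), ENNReal.ofReal_mul (Real.sqrt_nonneg a)]
  refine ENNReal.tsum_le_tsum fun j => pow_le_pow_left' ?_ M
  calc _ = ∫⁻ r in Ioi 0, ENNReal.ofReal (f r ^ j) * (ENNReal.ofReal √lam₂ * ψ (√lam₂ * r)) :=
        setLIntegral_congr_fun measurableSet_Ioi (integrand_eq j _ (hlam₁.trans_le hlam₁₂).le)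
    _ ≤ ∫⁻ r in Ioi 0, ENNReal.ofReal (f r ^ j) * (ENNReal.ofReal √lam₁ * ψ (√lam₁ * r)) :=
        setLIntegral_Ioi_mul_rescale_le
          (fun r hr s hs hrs => ENNReal.ofReal_le_ofReal
            (pow_le_pow_left₀ (hf_nonneg r hr) (hf_mono hr hs hrs) j))
          ψ (Real.sqrt_pos.2 hlam₁) (Real.sqrt_le_sqrt hlam₁₂)
    _ = _ := (setLIntegral_congr_fun measurableSet_Ioi (integrand_eq j _ hlam₁.le)).symm

/-- Network densification helps: for a nondecreasing nonnegative measurable path loss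
function `l`, the series `S(λ)` giving the mean number of IA cycles in the noise-limited
network is nonincreasing in the BS intensity `λ`. -/
theorem stmt4 (W gam P : ℝ) (M : ℕ)
    (hW : 0 < W) (hgam : 0 < gam) (hP : 0 < P) (hM : 0 < M)
    (l : ℝ → ℝ) (hlmeas : Measurable l) (hlmono : MonotoneOn l (Set.Ici (0:ℝ)))
    (hlnonneg : ∀ r, 0 ≤ r → 0 ≤ l r)
    (lam₁ lam₂ : ℝ) (hlam₁ : 0 < lam₁) (hlam₁₂ : lam₁ ≤ lam₂) :
    ∑' j : ℕ,
      (∫⁻ r in Set.Ioi (0:ℝ),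
        ENNReal.ofReal ((1 - Real.exp (-(W * gam * l r / (P * M)))) ^ j *
          (2 * lam₂ * π * r / M) * Real.exp (-(lam₂ * π * r ^ 2 / M)))) ^ M
    ≤ ∑' j : ℕ,
      (∫⁻ r in Set.Ioi (0:ℝ),
        ENNReal.ofReal ((1 - Real.exp (-(W * gam * l r / (P * M)))) ^ j *
          (2 * lam₁ * π * r / M) * Real.exp (-(lam₁ * π * r ^ 2 / M)))) ^ M :=
  stmt4_general W gam P M hW hgam hP l hlmono hlnonneg lam₁ lam₂ hlam₁ hlam₁₂
end

section
/- Let α_L > 0 and α_N = 2, let C_L, C_N, R_c, W, Γ, P, λ > 0, and let M be a positive integer, and define l(r) = C_L r^{α_L} for 0 ≤ r < R_c and l(r) = C_N r^{α_N} for r ≥ R_c. If λM < Γ C_N W/(Pπ), then the series ∑_{j=0}^{∞} ( ∫_0^∞ (1 − exp(−WΓ l(r)/(PM)))^j · (2λπ r/M) · exp(−λπ r²/M) dr )^M diverges, i.e., its value in [0,∞] is +∞. -/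
/-!
For `r ≥ R_c` the path loss is `C_N r²`, so with `a = W Γ C_N / (P M)` and `b = λ π / M` the
`j`-th integrand is `(1 - e^{-a r²})^j · 2 b r e^{-b r²}`. Beyond the radius `c_j` with
`a c_j² = log (2 j)`, Bernoulli's inequality gives `(1 - e^{-a r²})^j ≥ 1/2`, so the integral is at
least `e^{-b c_j²} / 2`. Its `M`-th power is at least `2^{-M} e^{-M b c_j²} ≥ 2^{-M} e^{-a c_j²}
= 2^{-M} / (2 j)` because `M b ≤ a` (the threshold condition), and the series is bounded below
by a harmonic series.
-/

open MeasureTheory Filter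
open scoped ENNReal Real

theorem ENNReal.tsum_eq_top_of_eventually_ofReal_div_natCast_le {f : ℕ → ℝ≥0∞} {K : ℝ}
    (hK : 0 < K) (h : ∀ᶠ j : ℕ in atTop, ENNReal.ofReal (K / j) ≤ f j) : ∑' j, f j = ⊤ := by
  by_contra hf
  have hKdiv : Summable fun j : ℕ => K / j :=
    (ENNReal.summable_toReal hf).of_norm_bounded_eventually_nat <| h.mono fun j hj => by
      rw [Real.norm_of_nonneg (by positivity)]
      exact (ENNReal.ofReal_le_iff_le_toReal (ENNReal.ne_top_of_tsum_ne_top hf j)).1 hj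
  simp only [div_eq_mul_inv] at hKdiv
  exact Real.not_summable_natCast_inv ((summable_mul_left_iff hK.ne').1 hKdiv)

theorem one_half_le_one_sub_pow {x : ℝ} {n : ℕ} (hx : x ≤ 2) (hnx : 2 * n * x ≤ 1) :
    1 / 2 ≤ (1 - x) ^ n := by
  have hbernoulli := one_add_mul_le_pow (a := -x) (by linarith) n
  rw [← sub_eq_add_neg, mul_neg] at hbernoulli
  linarith

theorem lintegral_Ioi_mul_exp_neg_mul_sq {b c : ℝ} (hb : 0 < b) (hc : 0 ≤ c) :
    ∫⁻ r in Set.Ioi c, ENNReal.ofReal (2 * b * r * Real.exp (-(b * r ^ 2))) =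
      ENNReal.ofReal (Real.exp (-(b * c ^ 2))) := by
  have hderiv : ∀ x ∈ Set.Ici c,
      HasDerivAt (fun r => -Real.exp (-(b * r ^ 2))) (2 * b * x * Real.exp (-(b * x ^ 2))) x := by
    intro x _
    refine (((hasDerivAt_pow 2 x).const_mul b).fun_neg.exp).fun_neg.congr_deriv ?_
    norm_num
    ring
  have hpos : ∀ x ∈ Set.Ioi c, 0 ≤ 2 * b * x * Real.exp (-(b * x ^ 2)) := fun x hx => by
    have : 0 ≤ x := hc.trans hx.le
    positivity
  have htendsto : Tendsto (fun r => -Real.exp (-(b * r ^ 2))) atTop (nhds 0) := by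
    simpa using (Real.tendsto_exp_atBot.comp <| tendsto_neg_atTop_atBot.comp <|
      tendsto_const_mul_pow_atTop two_ne_zero hb).neg
  rw [← ofReal_integral_eq_lintegral_ofReal (integrableOn_Ioi_deriv_of_nonneg' hderiv hpos htendsto)
      ((ae_restrict_iff' measurableSet_Ioi).2 (Eventually.of_forall hpos)),
    integral_Ioi_of_hasDerivAt_of_nonneg' hderiv hpos htendsto]
  simp

theorem ofReal_half_mul_exp_le_lintegral_Ioi {a b c : ℝ} {j : ℕ} (ha : 0 ≤ a) (hb : 0 < b)
    (hc : 0 ≤ c) (hjc : 2 * j * Real.exp (-(a * c ^ 2)) ≤ 1) :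
    ENNReal.ofReal (1 / 2 * Real.exp (-(b * c ^ 2))) ≤
      ∫⁻ r in Set.Ioi c, ENNReal.ofReal
        ((1 - Real.exp (-(a * r ^ 2))) ^ j * (2 * b * r * Real.exp (-(b * r ^ 2)))) := by
  have hhalf : ∀ r ∈ Set.Ioi c, 1 / 2 ≤ (1 - Real.exp (-(a * r ^ 2))) ^ j := fun r hr => by
    have hcr : c ^ 2 ≤ r ^ 2 := pow_le_pow_left₀ hc (Set.mem_Ioi.1 hr).le 2
    apply one_half_le_one_sub_pow
    · linarith [Real.exp_le_one_iff.2 (neg_nonpos.2 (by positivity : 0 ≤ a * r ^ 2))]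
    · calc 2 * j * Real.exp (-(a * r ^ 2)) ≤ 2 * j * Real.exp (-(a * c ^ 2)) := by gcongr
        _ ≤ 1 := hjc
  calc ENNReal.ofReal (1 / 2 * Real.exp (-(b * c ^ 2)))
      = ENNReal.ofReal (1 / 2) *
          ∫⁻ r in Set.Ioi c, ENNReal.ofReal (2 * b * r * Real.exp (-(b * r ^ 2))) := by
        rw [lintegral_Ioi_mul_exp_neg_mul_sq hb hc, ENNReal.ofReal_mul (by norm_num)]
    _ = ∫⁻ r in Set.Ioi c,
          ENNReal.ofReal (1 / 2) * ENNReal.ofReal (2 * b * r * Real.exp (-(b * r ^ 2))) :=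
        (lintegral_const_mul' _ _ ENNReal.ofReal_ne_top).symm
    _ ≤ _ := setLIntegral_mono' measurableSet_Ioi fun r hr => by
        have : 0 ≤ r := hc.trans (Set.mem_Ioi.1 hr).le
        rw [← ENNReal.ofReal_mul (by norm_num)]
        gcongr
        exact hhalf r hr

theorem ofReal_div_natCast_le_pow_lintegral_Ioi {a b R : ℝ} {M j : ℕ} (ha : 0 < a) (hb : 0 < b)
    (hba : M * b ≤ a) (hj : Real.exp (a * R ^ 2) ≤ j) {f : ℝ → ℝ}
    (hf : ∀ r, R ≤ r →
      f r = (1 - Real.exp (-(a * r ^ 2))) ^ j * (2 * b * r * Real.exp (-(b * r ^ 2)))) :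
    ENNReal.ofReal ((1 / 2) ^ M / 2 / j) ≤ (∫⁻ r in Set.Ioi 0, ENNReal.ofReal (f r)) ^ M := by
  have hexp_ge_one : 1 ≤ Real.exp (a * R ^ 2) := Real.one_le_exp (by positivity)
  have h2j : 0 < 2 * (j : ℝ) := by linarith
  set c := √(Real.log (2 * j) / a)
  have hc : 0 ≤ c := Real.sqrt_nonneg _
  have hac : a * c ^ 2 = Real.log (2 * j) := by
    rw [Real.sq_sqrt (div_nonneg (Real.log_nonneg (by linarith)) ha.le)]
    field_simp
  have hexp_ac : Real.exp (-(a * c ^ 2)) = 1 / (2 * j) := by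
    rw [hac, Real.exp_neg, Real.exp_log h2j, one_div]
  have hRc : R ≤ c := by
    refine (le_abs_self R).trans ?_
    rw [← Real.sqrt_sq_eq_abs]
    refine Real.sqrt_le_sqrt ((le_div_iff₀ ha).2 ?_)
    rw [mul_comm, Real.le_log_iff_exp_le h2j]
    linarith
  calc ENNReal.ofReal ((1 / 2) ^ M / 2 / j)
      = ENNReal.ofReal ((1 / 2) ^ M * Real.exp (-(a * c ^ 2))) := by
        rw [hexp_ac]
        ring_nf
    _ ≤ ENNReal.ofReal ((1 / 2 * Real.exp (-(b * c ^ 2))) ^ M) := by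
        rw [mul_pow, ← Real.exp_nat_mul]
        gcongr
        nlinarith [sq_nonneg c]
    _ = ENNReal.ofReal (1 / 2 * Real.exp (-(b * c ^ 2))) ^ M :=
        ENNReal.ofReal_pow (by positivity) M
    _ ≤ (∫⁻ r in Set.Ioi c, ENNReal.ofReal (f r)) ^ M := by
        rw [setLIntegral_congr_fun measurableSet_Ioi fun r hr => by rw [hf r (hRc.trans hr.le)]]
        gcongr
        exact ofReal_half_mul_exp_le_lintegral_Ioi ha.le hb hc (by rw [hexp_ac, mul_one_div_cancel h2j.ne'])
    _ ≤ (∫⁻ r in Set.Ioi 0, ENNReal.ofReal (f r)) ^ M := by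
        gcongr

theorem stmt5_general (αN CN Rc W gam P lam : ℝ) (M : ℕ)
    (hαN : αN = 2) (hCN : 0 < CN)
    (hW : 0 < W) (hgam : 0 < gam) (hP : 0 < P) (hlam : 0 < lam) (hM : 0 < M)
    (l : ℝ → ℝ)
    (hl2 : ∀ r, Rc ≤ r → l r = CN * r ^ αN)
    (hthr : lam * M < gam * CN * W / (P * π)) :
    ∑' j : ℕ,
      (∫⁻ r in Set.Ioi (0:ℝ),
        ENNReal.ofReal ((1 - Real.exp (-(W * gam * l r / (P * M)))) ^ j *
          (2 * lam * π * r / M) * Real.exp (-(lam * π * r ^ 2 / M)))) ^ M = ⊤ := by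
  have hMpos : (0 : ℝ) < M := by exact_mod_cast hM
  have hthreshold : M * (lam * π / M) ≤ W * gam * CN / (P * M) := by
    rw [mul_div_cancel₀ _ hMpos.ne', le_div_iff₀ (by positivity)]
    linarith [(lt_div_iff₀ (by positivity)).1 hthr]
  refine ENNReal.tsum_eq_top_of_eventually_ofReal_div_natCast_le (K := (1 / 2) ^ M / 2)
    (by positivity) ?_
  filter_upwards [tendsto_natCast_atTop_atTop.eventually_ge_atTop
    (Real.exp (W * gam * CN / (P * M) * Rc ^ 2))] with j hj
  refine ofReal_div_natCast_le_pow_lintegral_Ioi (by positivity) (by positivity) hthreshold hj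
    fun r hr => ?_
  rw [hl2 r hr, hαN, Real.rpow_two]
  ring_nf

/-- Divergence half of Theorem 4: with NLOS path loss exponent `αN = 2`, if
`λ M < Γ C_N W / (P π)`, the series giving the mean number of IA cycles diverges. -/
theorem stmt5 (αL αN CL CN Rc W gam P lam : ℝ) (M : ℕ)
    (hαL : 0 < αL) (hαN : αN = 2) (hCL : 0 < CL) (hCN : 0 < CN) (hRc : 0 < Rc)
    (hW : 0 < W) (hgam : 0 < gam) (hP : 0 < P) (hlam : 0 < lam) (hM : 0 < M)
    (l : ℝ → ℝ)
    (hl1 : ∀ r, 0 ≤ r → r < Rc → l r = CL * r ^ αL)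
    (hl2 : ∀ r, Rc ≤ r → l r = CN * r ^ αN)
    (hthr : lam * M < gam * CN * W / (P * π)) :
    ∑' j : ℕ,
      (∫⁻ r in Set.Ioi (0:ℝ),
        ENNReal.ofReal ((1 - Real.exp (-(W * gam * l r / (P * M)))) ^ j *
          (2 * lam * π * r / M) * Real.exp (-(lam * π * r ^ 2 / M)))) ^ M = ⊤ :=
  stmt5_general αN CN Rc W gam P lam M hαN hCN hW hgam hP hlam hM l hl2 hthr
end

section
/- Let α_L > 0 and α_N = 2, let C_L, C_N, R_c, W, Γ, P, λ > 0, and let M be a positive integer, and define l(r) = C_L r^{α_L} for 0 ≤ r < R_c and l(r) = C_N r^{α_N} for r ≥ R_c. If λM > Γ C_N W/(Pπ), then the series ∑_{j=0}^{∞} ( ∫_0^∞ (1 − exp(−WΓ l(r)/(PM)))^j · (2λπ r/M) · exp(−λπ r²/M) dr )^M converges to a finite value. -/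
/-!
Split each integral at `Rc`. On `(0, Rc)` the factor `1 - exp (-(W Γ l(r) / (P M)))` is at most
a constant `q < 1`, which contributes a geometric term `q ^ j`. On `[Rc, ∞)` put
`u = exp (-(κ r²))` with `κ = W Γ C_N / (P M)`: the bound
`(1 - u) ^ j u ^ β ≤ β ^ β e ^ (-β) j ^ (-β)` trades a factor `u ^ β` of the weight
`exp (-(λ π r² / M))` for the decay `j ^ (-β)`, and what is left of the weight is still an
integrable Gaussian as long as `β κ < λ π / M`. The threshold condition is exactly what allows
such a `β` with `β M > 1`, so the `M`-th powers are summable.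
-/

open MeasureTheory Real Set
open scoped ENNReal

theorem Real.rpow_mul_exp_neg_le {β t : ℝ} (hβ : 0 < β) (ht : 0 ≤ t) :
    t ^ β * exp (-t) ≤ β ^ β * exp (-β) := by
  have h : (t / β) ^ β ≤ exp (t - β) := calc
    (t / β) ^ β ≤ exp (t / β - 1) ^ β := by
      gcongr
      linarith [add_one_le_exp (t / β - 1)]
    _ = exp (t - β) := by rw [← exp_mul]; congr 1; field_simp
  rw [div_rpow ht hβ.le, div_le_iff₀ (by positivity)] at h
  calc t ^ β * exp (-t) ≤ exp (t - β) * β ^ β * exp (-t) := by gcongr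
    _ = β ^ β * exp (-β) := by rw [mul_right_comm, ← exp_add]; ring_nf

theorem Real.one_sub_pow_mul_rpow_le {β u : ℝ} (hβ : 0 < β) (hu₀ : 0 ≤ u) (hu₁ : u ≤ 1)
    {j : ℕ} (hj : j ≠ 0) :
    (1 - u) ^ j * u ^ β ≤ β ^ β * exp (-β) * (j : ℝ) ^ (-β) := by
  have hj₀ : (0 : ℝ) < j := by positivity
  calc (1 - u) ^ j * u ^ β ≤ exp (-u) ^ j * u ^ β := by
        gcongr
        linarith [add_one_le_exp (-u)]
    _ = (j * u) ^ β * exp (-(j * u)) * (j : ℝ) ^ (-β) := by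
        rw [← exp_nat_mul, mul_rpow hj₀.le hu₀, rpow_neg hj₀.le]
        field_simp
    _ ≤ β ^ β * exp (-β) * (j : ℝ) ^ (-β) := by
        gcongr ?_ * _
        exact rpow_mul_exp_neg_le hβ (by positivity)

theorem Real.one_sub_exp_neg_pow_mul_exp_neg_le {β κ c x : ℝ} (hβ : 0 < β) (hκx : 0 ≤ κ * x)
    {j : ℕ} (hj : j ≠ 0) :
    (1 - exp (-(κ * x))) ^ j * exp (-(c * x)) ≤
      β ^ β * exp (-β) * (j : ℝ) ^ (-β) * exp (-((c - β * κ) * x)) := by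
  have hsplit : exp (-(c * x)) = exp (-(κ * x)) ^ β * exp (-((c - β * κ) * x)) := by
    rw [← exp_mul, ← exp_add]; ring_nf
  rw [hsplit, ← mul_assoc]
  exact mul_le_mul_of_nonneg_right (one_sub_pow_mul_rpow_le hβ (exp_pos _).le
    (exp_le_one_iff.mpr (neg_nonpos.mpr hκx)) hj) (exp_pos _).le

theorem Real.one_sub_exp_neg_mem_Icc {x X : ℝ} (hx : 0 ≤ x) (hxX : x ≤ X) :
    1 - exp (-x) ∈ Icc 0 (1 - exp (-X)) :=
  ⟨sub_nonneg.mpr (exp_le_one_iff.mpr (neg_nonpos.mpr hx)),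
    sub_le_sub_left (exp_le_exp.mpr (neg_le_neg hxX)) 1⟩

theorem lintegral_Ioi_mul_exp_neg_mul_sq_lt_top (b : ℝ) {c : ℝ} (hc : 0 < c) :
    ∫⁻ r in Ioi 0, ENNReal.ofReal (b * r * exp (-(c * r ^ 2))) < ⊤ := by
  have h := ((integrable_mul_exp_neg_mul_sq hc).const_mul b).integrableOn (s := Ioi 0)
  simp only [neg_mul, ← mul_assoc] at h
  exact h.lintegral_lt_top

theorem lintegral_Ioi_pow_mul_exp_neg_mul_sq_le {φ : ℝ → ℝ} {R q κ b c β : ℝ}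
    (hb : 0 ≤ b) (hβ : 0 < β) (hκ : 0 ≤ κ)
    (hhead : ∀ r, 0 < r → r < R → φ r ∈ Icc 0 q)
    (htail : ∀ r, R ≤ r → φ r = 1 - exp (-(κ * r ^ 2))) (j : ℕ) :
    ∫⁻ r in Ioi 0, ENNReal.ofReal (φ r ^ j * (b * r) * exp (-(c * r ^ 2))) ≤
      ENNReal.ofReal q ^ j * (∫⁻ r in Ioi 0, ENNReal.ofReal (b * r * exp (-(c * r ^ 2)))) +
      ENNReal.ofReal (β ^ β * exp (-β) * (j : ℝ) ^ (-β)) *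
        ∫⁻ r in Ioi 0, ENNReal.ofReal (b * r * exp (-((c - β * κ) * r ^ 2))) := by
  rcases eq_or_ne j 0 with rfl | hj
  -- at `j = 0` the second term is junk (`0 ^ (-β) = 0`), but the first one already suffices
  · simp only [pow_zero, one_mul]
    exact le_self_add
  rw [← lintegral_const_mul _ (by fun_prop), ← lintegral_const_mul _ (by fun_prop),
    ← lintegral_add_left (by fun_prop)]
  refine setLIntegral_mono (by fun_prop) fun r (hr : 0 < r) => ?_
  have hbr : 0 ≤ b * r := by positivity
  rcases lt_or_ge r R with hrR | hrR
  · obtain ⟨hφ₀, hφq⟩ := hhead r hr hrR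
    have hq : 0 ≤ q := hφ₀.trans hφq
    refine le_add_right ?_
    rw [← ENNReal.ofReal_pow hq, ← ENNReal.ofReal_mul (by positivity), mul_assoc]
    exact ENNReal.ofReal_le_ofReal <|
      mul_le_mul_of_nonneg_right (pow_le_pow_left₀ hφ₀ hφq j) (by positivity)
  · refine le_add_left ?_
    rw [htail r hrR, ← ENNReal.ofReal_mul (by positivity)]
    refine ENNReal.ofReal_le_ofReal ?_
    calc (1 - exp (-(κ * r ^ 2))) ^ j * (b * r) * exp (-(c * r ^ 2))
        = (1 - exp (-(κ * r ^ 2))) ^ j * exp (-(c * r ^ 2)) * (b * r) := by ring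
      _ ≤ β ^ β * exp (-β) * (j : ℝ) ^ (-β) * exp (-((c - β * κ) * r ^ 2)) * (b * r) :=
        mul_le_mul_of_nonneg_right
          (one_sub_exp_neg_pow_mul_exp_neg_le hβ (by positivity) hj) hbr
      _ = _ := by ring

theorem ENNReal.add_pow_le_two_pow_mul (x y : ℝ≥0∞) (n : ℕ) :
    (x + y) ^ n ≤ 2 ^ n * (x ^ n + y ^ n) :=
  calc (x + y) ^ n ≤ (2 * max x y) ^ n := by
        gcongr
        rw [two_mul]
        exact add_le_add (le_max_left x y) (le_max_right x y)
    _ = 2 ^ n * max (x ^ n) (y ^ n) := by rw [mul_pow, (pow_left_mono n).map_max]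
    _ ≤ 2 ^ n * (x ^ n + y ^ n) := by gcongr; exact max_le le_self_add le_add_self

theorem ENNReal.tsum_pow_lt_top_of_le_geometric_add_rpow {a : ℕ → ℝ≥0∞} {q A B : ℝ≥0∞}
    {C β : ℝ} {M : ℕ} (hq : q < 1) (hA : A ≠ ⊤) (hB : B ≠ ⊤) (hC : 0 ≤ C)
    (hβM : 1 < β * M) (ha : ∀ j, a j ≤ q ^ j * A + ENNReal.ofReal (C * (j : ℝ) ^ (-β)) * B) :
    ∑' j : ℕ, a j ^ M < ⊤ := by
  have hM : M ≠ 0 := by rintro rfl; norm_num at hβM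
  have hgeom : ∑' j : ℕ, (q ^ j * A) ^ M < ⊤ := by
    simp_rw [mul_pow, ← pow_mul, mul_comm _ M, pow_mul]
    rw [ENNReal.tsum_mul_right, ENNReal.tsum_geometric]
    exact ENNReal.mul_lt_top (ENNReal.inv_lt_top.mpr (tsub_pos_of_lt (pow_lt_one₀ zero_le hq hM)))
      (ENNReal.pow_lt_top hA.lt_top)
  have hpseries : ∑' j : ℕ, (ENNReal.ofReal (C * (j : ℝ) ^ (-β)) * B) ^ M < ⊤ := by
    have hsum : Summable fun j : ℕ => C ^ M * (j : ℝ) ^ (-(β * M)) :=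
      (Real.summable_nat_rpow.mpr (by linarith)).mul_left _
    have hpow (j : ℕ) : (ENNReal.ofReal (C * (j : ℝ) ^ (-β)) * B) ^ M =
        ENNReal.ofReal (C ^ M * (j : ℝ) ^ (-(β * M))) * B ^ M := by
      rw [mul_pow, ← ENNReal.ofReal_pow (by positivity), mul_pow,
        ← Real.rpow_mul_natCast (Nat.cast_nonneg j), neg_mul]
    simp_rw [hpow]
    rw [ENNReal.tsum_mul_right, ← ENNReal.ofReal_tsum_of_nonneg (fun j => by positivity) hsum]
    exact ENNReal.mul_lt_top ENNReal.ofReal_lt_top (ENNReal.pow_lt_top hB.lt_top)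
  calc ∑' j : ℕ, a j ^ M ≤ ∑' j : ℕ, 2 ^ M * ((q ^ j * A) ^ M +
        (ENNReal.ofReal (C * (j : ℝ) ^ (-β)) * B) ^ M) :=
        ENNReal.tsum_le_tsum fun j =>
          (pow_le_pow_left₀ zero_le (ha j) M).trans (add_pow_le_two_pow_mul _ _ M)
    _ = 2 ^ M * (∑' j : ℕ, (q ^ j * A) ^ M +
          ∑' j : ℕ, (ENNReal.ofReal (C * (j : ℝ) ^ (-β)) * B) ^ M) := by
        rw [ENNReal.tsum_mul_left, ENNReal.tsum_add]
    _ < ⊤ := ENNReal.mul_lt_top (ENNReal.pow_lt_top ENNReal.ofNat_lt_top)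
        (ENNReal.add_lt_top.mpr ⟨hgeom, hpseries⟩)

theorem stmt6_general (αL αN CL CN Rc W gam P lam : ℝ) (M : ℕ)
    (hαL : 0 < αL) (hαN : αN = 2) (hCL : 0 < CL) (hCN : 0 < CN)
    (hW : 0 < W) (hgam : 0 < gam) (hP : 0 < P) (hlam : 0 < lam) (hM : 0 < M)
    (l : ℝ → ℝ)
    (hl1 : ∀ r, 0 ≤ r → r < Rc → l r = CL * r ^ αL)
    (hl2 : ∀ r, Rc ≤ r → l r = CN * r ^ αN)
    (hthr : gam * CN * W / (P * π) < lam * M) :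
    ∑' j : ℕ,
      (∫⁻ r in Set.Ioi (0:ℝ),
        ENNReal.ofReal ((1 - Real.exp (-(W * gam * l r / (P * M)))) ^ j *
          (2 * lam * π * r / M) * Real.exp (-(lam * π * r ^ 2 / M)))) ^ M < ⊤ := by
  have hMpos : (0 : ℝ) < M := by exact_mod_cast hM
  set κ := W * gam * CN / (P * M) with hκ_def
  set c := lam * π / M with hc_def
  have hκ : 0 < κ := by positivity
  have hc : 0 < c := by positivity
  -- `hthr` says `κ < M c`, which leaves room for an exponent `1 / M < β < c / κ`.
  obtain ⟨β, hMβ, hβκ⟩ : ∃ β, (M : ℝ)⁻¹ < β ∧ β < c / κ := by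
    refine exists_between ?_
    rw [div_lt_iff₀ (by positivity)] at hthr
    rw [hc_def, hκ_def]
    field_simp
    linarith
  have hβ : 0 < β := lt_trans (by positivity) hMβ
  have hβM : 1 < β * M := by rwa [inv_lt_iff_one_lt_mul₀ hMpos] at hMβ
  have hcβκ : 0 < c - β * κ := by rw [lt_div_iff₀ hκ] at hβκ; linarith
  have hhead : ∀ r, 0 < r → r < Rc → 1 - exp (-(W * gam * l r / (P * M))) ∈
      Icc 0 (1 - exp (-(W * gam * (CL * Rc ^ αL) / (P * M)))) := by
    intro r hr hrR
    rw [hl1 r hr.le hrR]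
    exact one_sub_exp_neg_mem_Icc (by positivity) (by gcongr)
  have htail : ∀ r, Rc ≤ r →
      1 - exp (-(W * gam * l r / (P * M))) = 1 - exp (-(κ * r ^ 2)) := by
    intro r hr
    rw [hl2 r hr, hαN, rpow_two, hκ_def]
    ring_nf
  refine ENNReal.tsum_pow_lt_top_of_le_geometric_add_rpow ?_ ?_ ?_ ?_ hβM fun j =>
    (lintegral_congr fun r => ?_).trans_le (lintegral_Ioi_pow_mul_exp_neg_mul_sq_le
      (b := 2 * lam * π / M) (c := c) (by positivity) hβ hκ.le hhead htail j)
  · exact ENNReal.ofReal_lt_one.mpr (sub_lt_self 1 (exp_pos _))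
  · exact (lintegral_Ioi_mul_exp_neg_mul_sq_lt_top _ hc).ne
  · exact (lintegral_Ioi_mul_exp_neg_mul_sq_lt_top _ hcβκ).ne
  · positivity
  · rw [hc_def]
    ring_nf

/-- Convergence half of Theorem 4: with NLOS path loss exponent `αN = 2`, if
`λ M > Γ C_N W / (P π)`, the series giving the mean number of IA cycles is finite. -/
theorem stmt6 (αL αN CL CN Rc W gam P lam : ℝ) (M : ℕ)
    (hαL : 0 < αL) (hαN : αN = 2) (hCL : 0 < CL) (hCN : 0 < CN) (hRc : 0 < Rc)
    (hW : 0 < W) (hgam : 0 < gam) (hP : 0 < P) (hlam : 0 < lam) (hM : 0 < M)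
    (l : ℝ → ℝ)
    (hl1 : ∀ r, 0 ≤ r → r < Rc → l r = CL * r ^ αL)
    (hl2 : ∀ r, Rc ≤ r → l r = CN * r ^ αN)
    (hthr : gam * CN * W / (P * π) < lam * M) :
    ∑' j : ℕ,
      (∫⁻ r in Set.Ioi (0:ℝ),
        ENNReal.ofReal ((1 - Real.exp (-(W * gam * l r / (P * M)))) ^ j *
          (2 * lam * π * r / M) * Real.exp (-(lam * π * r ^ 2 / M)))) ^ M < ⊤ :=
  stmt6_general αL αN CL CN Rc W gam P lam M hαL hαN hCL hCN hW hgam hP hlam hM l hl1 hl2 hthr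
end

section
/- Let λ > 0, Γ > 0, α > 2, let M be a positive integer, and let j ≥ 0 be an integer. Then ∫_0^∞ [ ∑_{k=0}^{j} (−1)^k binom(j,k) exp( −(2πλ/M) ∫_{r₁}^{∞} (1 − (1 + Γ r₁^α/r^α)^{−k}) r dr ) ] · (2λπ r₁/M) · exp(−λπ r₁²/M) dr₁ = ∑_{k=0}^{j} (−1)^k binom(j,k) / (1 + 2 H(k, α, Γ)), where H(k, α, Γ) = ∫_1^∞ (1 − (1 + Γ/r^α)^{−k}) r dr. In particular, the left-hand side does not depend on λ or M. -/
/-!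
The substitution `r = r₁ s` turns the inner integral into `r₁² H(k, α, Γ)`, so after
expanding the sum each term is a Gaussian moment `∫₀^∞ r e^{-b r²} dr = 1 / (2b)` with
`b = (λπ / M) (1 + 2H)`; the factor `2λπ / M` of the nearest-distance density cancels
everything except `1 / (1 + 2H)`.
-/

open MeasureTheory Set
open scoped Real

theorem integral_Ioi_mul_exp_neg_mul_sq {b : ℝ} (hb : 0 < b) :
    ∫ r in Ioi (0 : ℝ), r * Real.exp (-b * r ^ 2) = (2 * b)⁻¹ := by
  apply Complex.ofReal_injective
  rw [← integral_complex_ofReal]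
  push_cast
  exact integral_mul_cexp_neg_mul_sq (by simpa using hb)

theorem setIntegral_Ioi_comp_div_mul_self (g : ℝ → ℝ) {a : ℝ} (ha : 0 < a) :
    ∫ r in Ioi a, g (r / a) * r = a ^ 2 * ∫ s in Ioi (1 : ℝ), g s * s := by
  have h := integral_comp_mul_left_Ioi (fun r => g (r / a) * r) 1 ha
  simp only [mul_one, mul_div_cancel_left₀ _ ha.ne', smul_eq_mul] at h
  rw [eq_inv_mul_iff_mul_eq₀ ha.ne'] at h
  rw [← h, ← integral_const_mul, ← integral_const_mul]
  congr 1 with s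
  ring

noncomputable def interferenceH (k : ℕ) (α Γ : ℝ) : ℝ :=
  ∫ r in Ioi (1 : ℝ), (1 - ((1 + Γ / r ^ α) ^ k)⁻¹) * r

theorem one_sub_inv_one_add_pow_nonneg {x : ℝ} (hx : 0 ≤ x) (k : ℕ) :
    0 ≤ 1 - ((1 + x) ^ k)⁻¹ :=
  sub_nonneg.mpr (inv_le_one_of_one_le₀ (one_le_pow₀ (by linarith)))

theorem interferenceH_nonneg (k : ℕ) (α : ℝ) {Γ : ℝ} (hΓ : 0 ≤ Γ) :
    0 ≤ interferenceH k α Γ :=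
  setIntegral_nonneg measurableSet_Ioi fun r (hr : 1 < r) =>
    mul_nonneg (one_sub_inv_one_add_pow_nonneg (by positivity) k) (by linarith)

theorem setIntegral_Ioi_interference_eq_sq_mul (k : ℕ) (α Γ : ℝ) {r₁ : ℝ}
    (hr₁ : 0 < r₁) :
    ∫ r in Ioi r₁, (1 - ((1 + Γ * r₁ ^ α / r ^ α) ^ k)⁻¹) * r =
      r₁ ^ 2 * interferenceH k α Γ := by
  rw [interferenceH, ← setIntegral_Ioi_comp_div_mul_self _ hr₁]
  refine setIntegral_congr_fun measurableSet_Ioi fun r (hr : r₁ < r) => ?_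
  have : (0 : ℝ) < r ^ α := Real.rpow_pos_of_pos (hr₁.trans hr) α
  rw [Real.div_rpow (hr₁.trans hr).le hr₁.le]
  field_simp

theorem stmt10_general (lam gam α : ℝ) (M j : ℕ)
    (hlam : 0 < lam) (hgam : 0 < gam) (hM : 0 < M) :
    ∫ r₁ in Set.Ioi (0:ℝ),
        (∑ k ∈ Finset.range (j + 1), (-1 : ℝ) ^ k * (j.choose k) *
          Real.exp (-(2 * π * lam / M) *
            ∫ r in Set.Ioi r₁, (1 - ((1 + gam * r₁ ^ α / r ^ α) ^ k)⁻¹) * r)) *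
        ((2 * lam * π * r₁ / M) * Real.exp (-(lam * π * r₁ ^ 2 / M)))
      = ∑ k ∈ Finset.range (j + 1), (-1 : ℝ) ^ k * (j.choose k) /
          (1 + 2 * ∫ r in Set.Ioi (1:ℝ), (1 - ((1 + gam / r ^ α) ^ k)⁻¹) * r) := by
  set p : ℝ := lam * π / M
  have hp : 0 < p := by positivity
  let b (k : ℕ) : ℝ := p * (1 + 2 * interferenceH k α gam)
  have hb (k : ℕ) : 0 < b k := by
    have := interferenceH_nonneg k α hgam.le
    positivity
  let c (k : ℕ) : ℝ := (-1) ^ k * j.choose k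
  calc _ = ∫ r₁ in Ioi (0 : ℝ),
        ∑ k ∈ Finset.range (j + 1), c k * (2 * p) * (r₁ * Real.exp (-b k * r₁ ^ 2)) := by
        refine setIntegral_congr_fun measurableSet_Ioi fun r₁ (hr₁ : 0 < r₁) => ?_
        rw [Finset.sum_mul]
        refine Finset.sum_congr rfl fun k _ => ?_
        rw [setIntegral_Ioi_interference_eq_sq_mul k α gam hr₁, mul_assoc,
          mul_left_comm (Real.exp _), ← Real.exp_add]
        simp only [b, c, p]
        ring_nf
    _ = ∑ k ∈ Finset.range (j + 1), c k * (2 * p) * (2 * b k)⁻¹ := by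
        rw [integral_finsetSum _ fun k _ =>
          (integrable_mul_exp_neg_mul_sq (hb k)).integrableOn.const_mul _]
        simp only [integral_const_mul, integral_Ioi_mul_exp_neg_mul_sq (hb _)]
    _ = _ := by
        refine Finset.sum_congr rfl fun k _ => ?_
        have := interferenceH_nonneg k α hgam.le
        change c k * (2 * p) * (2 * (p * (1 + 2 * interferenceH k α gam)))⁻¹
          = c k / (1 + 2 * interferenceH k α gam)
        field_simp

/-- Lemma 3 computation: the coefficient `A_j` of the interference-limited series equals a
λ- and M-independent alternating sum involving `H(k,α,Γ)`. -/
theorem stmt10 (lam gam α : ℝ) (M j : ℕ)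
    (hlam : 0 < lam) (hgam : 0 < gam) (hα : 2 < α) (hM : 0 < M) :
    ∫ r₁ in Set.Ioi (0:ℝ),
        (∑ k ∈ Finset.range (j + 1), (-1 : ℝ) ^ k * (j.choose k) *
          Real.exp (-(2 * π * lam / M) *
            ∫ r in Set.Ioi r₁, (1 - ((1 + gam * r₁ ^ α / r ^ α) ^ k)⁻¹) * r)) *
        ((2 * lam * π * r₁ / M) * Real.exp (-(lam * π * r₁ ^ 2 / M)))
      = ∑ k ∈ Finset.range (j + 1), (-1 : ℝ) ^ k * (j.choose k) /
          (1 + 2 * ∫ r in Set.Ioi (1:ℝ), (1 - ((1 + gam / r ^ α) ^ k)⁻¹) * r) :=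
  stmt10_general lam gam α M j hlam hgam hM
end

section
/- Let Γ > 0 and α > 2 + 2Γ, set H(k) = ∫_{1}^{∞} (1 − (1 + Γ/r^α)^{−k}) r dr and A_j = ∑_{k=0}^{j} (−1)^k binom(j,k)/(1 + 2 H(k)) for integers j, k ≥ 0. Then for every positive integer M, the series ∑_{j=0}^{∞} A_j^M converges to a finite value. -/
/-!
Put `G r = 1 + Γ / r ^ α`, `b k = ∫_1^∞ G r · r · (1 - G r ^ (-k)) dr` and
`F k = (c + 2 b k)⁻¹` with `c = 1 - 2Γ/(α-2)`. Since `b (k+1) = H k + Γ/(α-2)`, we get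
`F (k+1) = 1/(1 + 2 H k)`, so `A j = (-1)^j Δ^j F (1)`.

The sequence `F` is completely monotone: `b` is a limit of `m_R 0 - m_R k` where
`m_R k = ∫_1^R G r · r · G r ^ (-k) dr` is a mixture of geometric sequences, hence `exp (-t b)` is
completely monotone for `t ≥ 0`, and so is `F k = ∫_0^∞ exp (-t (c + 2 b k)) dt`; this needs
`c > 0`, which is exactly `α > 2 + 2Γ`. For a completely monotone `F` the numbers
`(-1)^j Δ^j F (1)` lie in `[0, F 1] = [0, 1]` and telescope,
`∑_{j<N} (-1)^j Δ^j F (1) = F 0 - (-1)^N Δ^N F (0) ≤ F 0`, so `∑ A_j` converges,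
and `A_j ^ M ≤ A_j`.
-/

open MeasureTheory Filter Topology fwdDiff

section CompletelyMonotone

open Finset

def negDiff (f : ℕ → ℝ) : ℕ → ℝ := fun k => f k - f (k + 1)

lemma negDiff_iter_succ_apply (f : ℕ → ℝ) (n k : ℕ) :
    negDiff^[n + 1] f k = negDiff^[n] f k - negDiff^[n] f (k + 1) := by
  rw [Function.iterate_succ_apply']
  rfl

lemma negDiff_iter_eq_smul_fwdDiff_iter (f : ℕ → ℝ) (n : ℕ) :
    negDiff^[n] f = (-1 : ℝ) ^ n • (Δ_[1])^[n] f := by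
  induction n with
  | zero => simp
  | succ n ih =>
    have h (g : ℕ → ℝ) : negDiff g = (-1 : ℝ) • Δ_[1] g := by
      funext k
      simp [negDiff, fwdDiff]
    rw [Function.iterate_succ_apply', ih, h, fwdDiff_const_smul, smul_smul, pow_succ',
      Function.iterate_succ_apply']

lemma neg_one_pow_mul_neg_one_pow_sub {R : Type*} [Monoid R] [HasDistribNeg R] {n k : ℕ}
    (hk : k ≤ n) : (-1 : R) ^ n * (-1) ^ (n - k) = (-1) ^ k := by
  obtain ⟨i, rfl⟩ := Nat.exists_eq_add_of_le hk
  rw [Nat.add_sub_cancel_left, pow_add, mul_assoc, ← pow_add, Even.neg_one_pow ⟨i, rfl⟩, mul_one]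

lemma negDiff_iter_eq_sum_shift (f : ℕ → ℝ) (n y : ℕ) :
    negDiff^[n] f y = ∑ k ∈ range (n + 1), (-1 : ℝ) ^ k * n.choose k * f (y + k) := by
  rw [negDiff_iter_eq_smul_fwdDiff_iter, Pi.smul_apply, fwdDiff_iter_eq_sum_shift, smul_sum]
  refine sum_congr rfl fun k hk => ?_
  rw [smul_eq_mul, zsmul_eq_mul, smul_eq_mul, mul_one]
  push_cast
  rw [← neg_one_pow_mul_neg_one_pow_sub (Nat.lt_succ_iff.mp (mem_range.mp hk))]
  ring

lemma negDiff_iter_add (f g : ℕ → ℝ) (n : ℕ) :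
    negDiff^[n] (f + g) = negDiff^[n] f + negDiff^[n] g := by
  funext k
  simp only [negDiff_iter_eq_sum_shift, Pi.add_apply, mul_add, sum_add_distrib]

lemma negDiff_iter_const_mul (c : ℝ) (f : ℕ → ℝ) (n k : ℕ) :
    negDiff^[n] (fun k => c * f k) k = c * negDiff^[n] f k := by
  simp only [negDiff_iter_eq_sum_shift, mul_sum]
  exact sum_congr rfl fun _ _ => by ring

lemma negDiff_iter_comp_succ (f : ℕ → ℝ) (n k : ℕ) :
    negDiff^[n] (fun k => f (k + 1)) k = negDiff^[n] f (k + 1) := by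
  simp only [negDiff_iter_eq_sum_shift, add_right_comm]

lemma negDiff_iter_finsetSum {ι : Type*} (s : Finset ι) (F : ι → ℕ → ℝ) (n k : ℕ) :
    negDiff^[n] (fun k => ∑ i ∈ s, F i k) k = ∑ i ∈ s, negDiff^[n] (F i) k := by
  simp only [negDiff_iter_eq_sum_shift, mul_sum]
  exact sum_comm

lemma negDiff_iter_integral {X : Type*} [MeasurableSpace X] {μ : Measure X} {F : X → ℕ → ℝ}
    (hF : ∀ k, Integrable (fun t => F t k) μ) (n k : ℕ) :
    negDiff^[n] (fun k => ∫ t, F t k ∂μ) k = ∫ t, negDiff^[n] (F t) k ∂μ := by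
  simp only [negDiff_iter_eq_sum_shift]
  rw [integral_finsetSum _ fun i _ => (hF _).const_mul _]
  simp only [integral_const_mul]

lemma tendsto_negDiff_iter {ι : Type*} {l : Filter ι} {F : ι → ℕ → ℝ} {f : ℕ → ℝ}
    (h : ∀ k, Tendsto (fun i => F i k) l (𝓝 (f k))) (n k : ℕ) :
    Tendsto (fun i => negDiff^[n] (F i) k) l (𝓝 (negDiff^[n] f k)) := by
  simp only [negDiff_iter_eq_sum_shift]
  exact tendsto_finsetSum _ fun i _ => (h _).const_mul _

lemma negDiff_mul (f g : ℕ → ℝ) :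
    negDiff (f * g) = f * negDiff g + negDiff f * fun k => g (k + 1) := by
  funext k
  simp only [negDiff, Pi.add_apply, Pi.mul_apply]
  ring

lemma negDiff_iter_pow_apply (x : ℝ) (n k : ℕ) :
    negDiff^[n] (fun k => x ^ k) k = x ^ k * (1 - x) ^ n := by
  induction n generalizing k with
  | zero => simp
  | succ n ih =>
    rw [negDiff_iter_succ_apply, ih, ih]
    ring

lemma sum_range_negDiff_iter (f : ℕ → ℝ) (N k : ℕ) :
    ∑ n ∈ range N, negDiff^[n] f (k + 1) = f k - negDiff^[N] f k := by
  induction N with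
  | zero => simp
  | succ N ih =>
    rw [sum_range_succ, ih, negDiff_iter_succ_apply]
    ring

def IsCompletelyMonotone (f : ℕ → ℝ) : Prop := ∀ n k, 0 ≤ negDiff^[n] f k

lemma isCompletelyMonotone_pow {x : ℝ} (h₀ : 0 ≤ x) (h₁ : x ≤ 1) :
    IsCompletelyMonotone fun k => x ^ k := fun n k => by
  rw [negDiff_iter_pow_apply]
  exact mul_nonneg (pow_nonneg h₀ k) (pow_nonneg (sub_nonneg.mpr h₁) n)

namespace IsCompletelyMonotone

variable {f g : ℕ → ℝ}

lemma negDiff_iter_le (hf : IsCompletelyMonotone f) (n k : ℕ) : negDiff^[n] f k ≤ f k := by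
  induction n with
  | zero => rfl
  | succ n ih =>
    rw [negDiff_iter_succ_apply]
    linarith [hf n (k + 1)]

lemma summable_negDiff_iter (hf : IsCompletelyMonotone f) (k : ℕ) :
    Summable fun n => negDiff^[n] f (k + 1) :=
  summable_of_sum_range_le (fun n => hf n (k + 1)) fun N => by
    rw [sum_range_negDiff_iter]
    linarith [hf N k]

lemma negDiff (hf : IsCompletelyMonotone f) : IsCompletelyMonotone (negDiff f) := fun n k => by
  rw [← Function.iterate_succ_apply]
  exact hf (n + 1) k

lemma comp_succ (hf : IsCompletelyMonotone f) : IsCompletelyMonotone fun k => f (k + 1) :=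
  fun n k => by
    rw [negDiff_iter_comp_succ]
    exact hf n (k + 1)

lemma const_mul (hf : IsCompletelyMonotone f) {c : ℝ} (hc : 0 ≤ c) :
    IsCompletelyMonotone fun k => c * f k := fun n k => by
  rw [negDiff_iter_const_mul]
  exact mul_nonneg hc (hf n k)

lemma mul (hf : IsCompletelyMonotone f) (hg : IsCompletelyMonotone g) :
    IsCompletelyMonotone (f * g) := by
  intro n
  induction n generalizing f g with
  | zero => exact fun k => mul_nonneg (hf 0 k) (hg 0 k)
  | succ n ih =>
    intro k
    rw [Function.iterate_succ_apply, negDiff_mul, negDiff_iter_add]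
    exact add_nonneg (ih hf hg.negDiff k) (ih hf.negDiff hg.comp_succ k)

lemma pow (hf : IsCompletelyMonotone f) (m : ℕ) : IsCompletelyMonotone fun k => f k ^ m := by
  induction m with
  | zero => simpa using isCompletelyMonotone_pow zero_le_one le_rfl
  | succ m ih =>
    simp only [pow_succ]
    exact ih.mul hf

lemma of_tendsto {ι : Type*} {l : Filter ι} [l.NeBot] {F : ι → ℕ → ℝ}
    (hF : ∀ᶠ i in l, IsCompletelyMonotone (F i))
    (h : ∀ k, Tendsto (fun i => F i k) l (𝓝 (f k))) : IsCompletelyMonotone f := fun n k =>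
  ge_of_tendsto (tendsto_negDiff_iter h n k) (hF.mono fun _ hi => hi n k)

lemma of_hasSum {ι : Type*} {F : ι → ℕ → ℝ} (hF : ∀ i, IsCompletelyMonotone (F i))
    (h : ∀ k, HasSum (fun i => F i k) (f k)) : IsCompletelyMonotone f :=
  of_tendsto (l := atTop) (.of_forall fun s n k => by
    rw [negDiff_iter_finsetSum]
    exact sum_nonneg fun i _ => hF i n k) h

lemma integral {X : Type*} [MeasurableSpace X] {μ : Measure X} {F : X → ℕ → ℝ}
    (hF : ∀ᵐ t ∂μ, IsCompletelyMonotone (F t)) (hint : ∀ k, Integrable (fun t => F t k) μ) :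
    IsCompletelyMonotone fun k => ∫ t, F t k ∂μ := fun n k => by
  rw [negDiff_iter_integral hint]
  exact integral_nonneg_of_ae (hF.mono fun _ ht => ht n k)

lemma exp_mul (hf : IsCompletelyMonotone f) {τ : ℝ} (hτ : 0 ≤ τ) :
    IsCompletelyMonotone fun k => Real.exp (τ * f k) := by
  refine of_hasSum (F := fun i k => (τ ^ i / i.factorial) * f k ^ i)
    (fun i => (hf.pow i).const_mul (by positivity)) fun k => ?_
  have h := Real.exp_eq_exp_ℝ ▸ NormedSpace.expSeries_div_hasSum_exp (τ * f k)
  simpa only [mul_pow, div_mul_eq_mul_div] using h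

end IsCompletelyMonotone

lemma isCompletelyMonotone_exp_neg_mul_of_tendsto {ι : Type*} {l : Filter ι} [l.NeBot]
    {m : ι → ℕ → ℝ} {c : ι → ℝ} {b : ℕ → ℝ} (hm : ∀ᶠ i in l, IsCompletelyMonotone (m i))
    (h : ∀ k, Tendsto (fun i => c i - m i k) l (𝓝 (b k))) {t : ℝ} (ht : 0 ≤ t) :
    IsCompletelyMonotone fun k => Real.exp (-(t * b k)) := by
  refine .of_tendsto (F := fun i k => Real.exp (-(t * c i)) * Real.exp (t * m i k))
    (hm.mono fun i hi => (hi.exp_mul ht).const_mul (Real.exp_nonneg _)) fun k => ?_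
  have h' := (Real.continuous_exp.tendsto _).comp ((h k).const_mul t).neg
  refine h'.congr fun i => ?_
  simp only [Function.comp_apply, ← Real.exp_add]
  ring_nf

lemma integral_exp_neg_mul_Ioi_zero {b : ℝ} (hb : 0 < b) :
    ∫ t in Set.Ioi 0, Real.exp (-(t * b)) = b⁻¹ := by
  have h := integral_exp_mul_Ioi (neg_neg_of_pos hb) 0
  simp only [mul_zero, Real.exp_zero, neg_div_neg_eq, one_div] at h
  simpa only [mul_comm _ b, neg_mul_eq_neg_mul] using h

lemma isCompletelyMonotone_inv_of_exp_neg_mul {b : ℕ → ℝ} (hb : ∀ k, 0 < b k)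
    (h : ∀ t, 0 ≤ t → IsCompletelyMonotone fun k => Real.exp (-(t * b k))) :
    IsCompletelyMonotone fun k => (b k)⁻¹ := by
  simp only [← integral_exp_neg_mul_Ioi_zero (hb _)]
  refine .integral ((ae_restrict_mem measurableSet_Ioi).mono fun t ht => h t (le_of_lt ht))
    fun k => ?_
  simpa only [mul_comm _ (b k), neg_mul_eq_neg_mul, IntegrableOn] using
    integrableOn_exp_mul_Ioi (neg_neg_of_pos (hb k)) 0

end CompletelyMonotone

open Set

lemma isCompletelyMonotone_exp_neg_mul_integral_one_sub_pow {w x : ℝ → ℝ} {a : ℝ}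
    (hw : ∀ r ∈ Ioi a, 0 ≤ w r) (hx : ∀ r ∈ Ioi a, x r ∈ Icc 0 1)
    (hw_cont : ContinuousOn w (Ici a)) (hx_cont : ContinuousOn x (Ici a))
    (hint : ∀ k, IntegrableOn (fun r => w r * (1 - x r ^ k)) (Ioi a)) {t : ℝ} (ht : 0 ≤ t) :
    IsCompletelyMonotone fun k => Real.exp (-(t * ∫ r in Ioi a, w r * (1 - x r ^ k))) := by
  have hloc (k : ℕ) {R : ℝ} (hR : a ≤ R) :
      IntervalIntegrable (fun r => w r * x r ^ k) volume a R :=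
    ((hw_cont.mul (hx_cont.pow k)).mono Icc_subset_Ici_self).intervalIntegrable_of_Icc hR
  -- `w` need not be integrable on `Ioi a`, so the integral is split only after truncating at `R`.
  refine isCompletelyMonotone_exp_neg_mul_of_tendsto (l := atTop)
    (m := fun R k => ∫ r in a..R, w r * x r ^ k) (c := fun R => ∫ r in a..R, w r * x r ^ 0)
    ?_ (fun k => ?_) ht
  · filter_upwards [eventually_ge_atTop a] with R hR
    simp only [intervalIntegral.integral_of_le hR]
    refine .integral ?_ fun k => (hloc k hR).1
    filter_upwards [ae_restrict_mem measurableSet_Ioc] with r hr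
    exact (isCompletelyMonotone_pow (hx r hr.1).1 (hx r hr.1).2).const_mul (hw r hr.1)
  · refine (intervalIntegral_tendsto_integral_Ioi a (hint k) tendsto_id).congr' ?_
    filter_upwards [eventually_ge_atTop a] with R hR
    rw [id, ← intervalIntegral.integral_sub (hloc 0 hR) (hloc k hR)]
    simp only [pow_zero, mul_sub, mul_one]

section ShiftedH

variable {γ α : ℝ}

lemma one_le_one_add_div_rpow (hγ : 0 ≤ γ) {r : ℝ} (hr : 0 < r) : 1 ≤ 1 + γ / r ^ α := by
  have := div_nonneg hγ (Real.rpow_pos_of_pos hr α).le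
  linarith

lemma inv_one_add_div_rpow_mem_Icc (hγ : 0 ≤ γ) {r : ℝ} (hr : 0 < r) :
    (1 + γ / r ^ α)⁻¹ ∈ Icc 0 1 :=
  have hG := one_le_one_add_div_rpow (α := α) hγ hr
  ⟨inv_nonneg.mpr (zero_le_one.trans hG), inv_le_one_of_one_le₀ hG⟩

lemma continuousOn_one_add_div_rpow : ContinuousOn (fun r : ℝ => 1 + γ / r ^ α) (Ioi 0) :=
  continuousOn_const.add <| continuousOn_const.div
    (continuousOn_id.rpow_const fun _ hr => .inl (ne_of_gt hr))
    fun _ hr => (Real.rpow_pos_of_pos hr α).ne'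

lemma continuousOn_inv_one_add_div_rpow (hγ : 0 ≤ γ) :
    ContinuousOn (fun r : ℝ => (1 + γ / r ^ α)⁻¹) (Ioi 0) :=
  continuousOn_one_add_div_rpow.inv₀ fun _ hr =>
    (zero_lt_one.trans_le (one_le_one_add_div_rpow hγ hr)).ne'

noncomputable def shiftedH (γ α : ℝ) (k : ℕ) : ℝ :=
  ∫ r in Ioi 1, (1 + γ / r ^ α) * r * (1 - (1 + γ / r ^ α)⁻¹ ^ k)

lemma shiftedH_integrand_nonneg (hγ : 0 ≤ γ) {r : ℝ} (hr : 0 < r) (k : ℕ) :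
    0 ≤ (1 + γ / r ^ α) * r * (1 - (1 + γ / r ^ α)⁻¹ ^ k) := by
  obtain ⟨hx₀, hx₁⟩ := inv_one_add_div_rpow_mem_Icc (α := α) hγ hr
  exact mul_nonneg (by positivity) (sub_nonneg.mpr (pow_le_one₀ hx₀ hx₁))

lemma shiftedH_integrand_le (hγ : 0 ≤ γ) {r : ℝ} (hr : 0 < r) (k : ℕ) :
    (1 + γ / r ^ α) * r * (1 - (1 + γ / r ^ α)⁻¹ ^ k) ≤ γ * k * r ^ (1 - α) := by
  have bernoulli := one_add_mul_sub_le_pow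
    ((neg_nonpos.mpr zero_le_one).trans (inv_one_add_div_rpow_mem_Icc (α := α) hγ hr).1) k
  set G := 1 + γ / r ^ α
  have hG : 1 ≤ G := one_le_one_add_div_rpow hγ hr
  calc G * r * (1 - G⁻¹ ^ k) ≤ G * r * (k * (1 - G⁻¹)) := by gcongr; linarith
    _ = k * (G - 1) * r := by field_simp
    _ = γ * k * r ^ (1 - α) := by
      rw [Real.rpow_sub hr, Real.rpow_one]
      simp only [G]
      ring

lemma integrableOn_shiftedH_integrand (hγ : 0 ≤ γ) (hα : 2 < α) (k : ℕ) :
    IntegrableOn (fun r => (1 + γ / r ^ α) * r * (1 - (1 + γ / r ^ α)⁻¹ ^ k)) (Ioi 1) := by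
  have hcont : ContinuousOn (fun r => (1 + γ / r ^ α) * r * (1 - (1 + γ / r ^ α)⁻¹ ^ k))
      (Ioi 1) :=
    ((continuousOn_one_add_div_rpow.mul continuousOn_id).mul (continuousOn_const.sub
      ((continuousOn_inv_one_add_div_rpow hγ).pow k))).mono (Ioi_subset_Ioi zero_le_one)
  refine Integrable.mono' ((integrableOn_Ioi_rpow_of_lt (a := 1 - α) (by linarith)
    zero_lt_one).const_mul (γ * k)) (hcont.aestronglyMeasurable measurableSet_Ioi) ?_
  filter_upwards [ae_restrict_mem measurableSet_Ioi] with r hr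
  have hr₀ : (0 : ℝ) < r := zero_lt_one.trans hr
  rw [Real.norm_of_nonneg (shiftedH_integrand_nonneg hγ hr₀ k)]
  exact shiftedH_integrand_le hγ hr₀ k

lemma shiftedH_nonneg (hγ : 0 ≤ γ) (k : ℕ) : 0 ≤ shiftedH γ α k :=
  setIntegral_nonneg measurableSet_Ioi fun _ hr =>
    shiftedH_integrand_nonneg hγ (zero_lt_one.trans hr) k

lemma integral_Ioi_one_rpow_one_sub (hα : 2 < α) : ∫ r in Ioi 1, r ^ (1 - α) = 1 / (α - 2) := by
  rw [integral_Ioi_rpow_of_lt (by linarith) zero_lt_one, Real.one_rpow,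
    show 1 - α + 1 = -(α - 2) by ring, neg_div_neg_eq]

lemma integral_one_sub_inv_pow_mul_eq_shiftedH_succ_sub (hγ : 0 ≤ γ) (hα : 2 < α) (n : ℕ) :
    ∫ r in Ioi 1, (1 - ((1 + γ / r ^ α) ^ n)⁻¹) * r = shiftedH γ α (n + 1) - γ / (α - 2) := by
  have hpt : EqOn (fun r => (1 - ((1 + γ / r ^ α) ^ n)⁻¹) * r)
      (fun r => (1 + γ / r ^ α) * r * (1 - (1 + γ / r ^ α)⁻¹ ^ (n + 1)) - γ * r ^ (1 - α))
      (Ioi 1) := fun r hr => by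
    have hr₀ : (0 : ℝ) < r := zero_lt_one.trans hr
    have hG : 1 + γ / r ^ α ≠ 0 := (zero_lt_one.trans_le (one_le_one_add_div_rpow hγ hr₀)).ne'
    dsimp only
    rw [Real.rpow_sub hr₀, Real.rpow_one, show γ * (r / r ^ α) = (1 + γ / r ^ α - 1) * r by ring]
    generalize 1 + γ / r ^ α = G at hG ⊢
    rw [inv_pow]
    field_simp
    ring
  rw [setIntegral_congr_fun measurableSet_Ioi hpt, integral_sub
    (integrableOn_shiftedH_integrand hγ hα _) ((integrableOn_Ioi_rpow_of_lt (a := 1 - α)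
    (by linarith) zero_lt_one).const_mul γ), integral_const_mul, integral_Ioi_one_rpow_one_sub hα,
    mul_one_div]
  rfl

lemma isCompletelyMonotone_inv_shiftedH (hγ : 0 ≤ γ) (hα : 2 + 2 * γ < α) :
    IsCompletelyMonotone fun k => (1 - 2 * γ / (α - 2) + 2 * shiftedH γ α k)⁻¹ := by
  have hα₂ : 2 < α := by linarith
  have hc : 0 < 1 - 2 * γ / (α - 2) := by
    rw [sub_pos, div_lt_one (by linarith)]
    linarith
  refine isCompletelyMonotone_inv_of_exp_neg_mul
    (fun k => by linarith [shiftedH_nonneg (α := α) hγ k]) fun t ht => ?_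
  have hIci : Ici (1 : ℝ) ⊆ Ioi 0 := Ici_subset_Ioi.mpr zero_lt_one
  have key := (isCompletelyMonotone_exp_neg_mul_integral_one_sub_pow
    (w := fun r => (1 + γ / r ^ α) * r) (x := fun r => (1 + γ / r ^ α)⁻¹)
    (fun r hr => (mul_pos (zero_lt_one.trans_le (one_le_one_add_div_rpow hγ
      (zero_lt_one.trans hr))) (zero_lt_one.trans hr)).le)
    (fun r hr => inv_one_add_div_rpow_mem_Icc hγ (zero_lt_one.trans hr))
    ((continuousOn_one_add_div_rpow.mul continuousOn_id).mono hIci)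
    ((continuousOn_inv_one_add_div_rpow hγ).mono hIci)
    (integrableOn_shiftedH_integrand hγ hα₂) (t := 2 * t) (by positivity)).const_mul
    (Real.exp_nonneg (-(t * (1 - 2 * γ / (α - 2)))))
  convert key using 2 with k
  rw [shiftedH, ← Real.exp_add]
  ring_nf

end ShiftedH

/-- First bullet of Theorem 5: if `α > 2 + 2Γ`, then `∑_j A_j^M` converges for every number
of BS beams `M ≥ 1`. -/
theorem stmt15 (gam α : ℝ) (hgam : 0 < gam) (hα : 2 + 2 * gam < α)
    (H : ℕ → ℝ)
    (hH : ∀ k : ℕ, H k = ∫ r in Set.Ioi (1:ℝ), (1 - ((1 + gam / r ^ α) ^ k)⁻¹) * r)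
    (A : ℕ → ℝ)
    (hA : ∀ j : ℕ,
      A j = ∑ k ∈ Finset.range (j + 1), (-1 : ℝ) ^ k * (j.choose k) / (1 + 2 * H k))
    (M : ℕ) (hM : 0 < M) :
    Summable (fun j : ℕ => A j ^ M) := by
  set F : ℕ → ℝ := fun k => (1 - 2 * gam / (α - 2) + 2 * shiftedH gam α k)⁻¹
  have hF : IsCompletelyMonotone F := isCompletelyMonotone_inv_shiftedH hgam.le hα
  have hF_succ (n : ℕ) : F (n + 1) = (1 + 2 * H n)⁻¹ := by
    simp only [F]
    rw [hH, integral_one_sub_inv_pow_mul_eq_shiftedH_succ_sub hgam.le (by linarith)]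
    ring_nf
  have hA_eq (j : ℕ) : A j = negDiff^[j] F 1 := by
    rw [hA, negDiff_iter_eq_sum_shift]
    refine Finset.sum_congr rfl fun k _ => ?_
    rw [add_comm 1 k, hF_succ, div_eq_mul_inv]
  have hF_one : F 1 = 1 := by
    rw [hF_succ 0, hH]
    simp
  have hA_nonneg (j : ℕ) : 0 ≤ A j := hA_eq j ▸ hF j 1
  have hA_le_one (j : ℕ) : A j ≤ 1 := hA_eq j ▸ hF_one ▸ hF.negDiff_iter_le j 1
  have hA_summable : Summable A := by
    rw [funext hA_eq]
    exact hF.summable_negDiff_iter 0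
  exact hA_summable.of_nonneg_of_le (fun j => pow_nonneg (hA_nonneg j) M)
    fun j => pow_le_of_le_one (hA_nonneg j) (hA_le_one j) hM.ne'
end

section
/- Let (Ω, 𝒜, μ) be a probability space, let M ≥ 1 be an integer, and let R_1, …, R_M : Ω → [0,∞) be i.i.d. random variables whose common distribution is atomless, with complementary cumulative distribution function G(r) = μ(R_1 > r). Let F : [0,∞)^M → [0,∞) be a bounded measurable function that is symmetric (invariant under every permutation of its M arguments). Define h : [0,∞) → [0,∞) by h(r) = E[ F(r, R_2, …, R_M) · ∏_{j=2}^{M} 1_{R_j > r} ] / G(r)^{M−1} when G(r) > 0, and h(r) = 0 otherwise. Then h(min(R_1, …, R_M)) is a version of the conditional expectation of F(R_1, …, R_M) given the σ-algebra generated by min(R_1, …, R_M); that is, E[ F(R_1,…,R_M) ∣ σ(min_i R_i) ] = h(min_i R_i) almost surely. -/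
/-!
Let `ν = p^⊗M` be the law of `(R 0, …, R (M-1))`. As `p` is atomless, `ν`-a.s. the coordinates
are distinct, so the sets "the minimum is attained strictly at `i`" partition the space up to a
null set, and a symmetric integrand gets the same contribution from each of them. Splitting off the
minimal coordinate, for symmetric `g` and Borel `t` this gives
`E[g(R); min R ∈ t] = M ∫_t E[g(r, R 1, …, R (M-1)); R j > r ∀ j ≠ 0] dp(r)`.
For `g = F` the inner expectation is the numerator of `h(r)`; for `g = h ∘ min` it is
`h(r) G(r)^(M-1)`. These agree for `p`-a.e. `r`, since an atomless law gives no mass to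
`{r | G r = 0}`. So `F(R)` and `h(min R)` have the same integral over every event `{min R ∈ t}`.
-/

open MeasureTheory ProbabilityTheory Set
open scoped ENNReal

theorem ae_measure_Ioi_ne_zero {α : Type*} [LinearOrder α] [TopologicalSpace α] [OrderTopology α]
    [SecondCountableTopology α] [MeasurableSpace α] (p : Measure α) [NullSingletonClass p] :
    ∀ᵐ r ∂p, p (Ioi r) ≠ 0 := by
  set E := {r | p (Ioi r) = 0}
  obtain ⟨T, hTE, hT, hTU⟩ := TopologicalSpace.isOpen_biUnion_countable E Ioi
    fun _ _ => isOpen_Ioi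
  have hU : p (⋃ r ∈ E, Ioi r) = 0 := by
    rw [← hTU]
    exact (measure_biUnion_null_iff hT).2 fun r hr => hTE hr
  -- a point of `E` outside `⋃ r ∈ E, Ioi r` is the least element of `E`
  have hmin : (E \ ⋃ r ∈ E, Ioi r).Subsingleton := by
    rintro x ⟨hxE, hx⟩ y ⟨hyE, hy⟩
    simp only [mem_iUnion, mem_Ioi, not_exists, not_lt] at hx hy
    exact le_antisymm (hx y hyE) (hy x hxE)
  refine measure_mono_null (fun r hr => ?_) (measure_union_null hU (hmin.measure_zero p))
  by_cases h : r ∈ ⋃ r ∈ E, Ioi r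
  · exact .inl h
  · exact .inr ⟨not_not.1 hr, h⟩

theorem measure_prod_diagonal_eq_zero {α : Type*} [MeasurableSpace α] [MeasurableEq α]
    (p q : Measure α) [SFinite q] [NullSingletonClass q] :
    (p.prod q) (diagonal α) = 0 := by
  rw [Measure.prod_apply measurableSet_diagonal]
  simp [preimage, diagonal]

theorem ProbabilityTheory.iIndepFun.map_eq_pi_of_identDistrib {ι Ω β : Type*} [Fintype ι]
    [MeasurableSpace Ω] [MeasurableSpace β] {μ : Measure Ω} [IsProbabilityMeasure μ] {X : ι → Ω → β}
    (hind : iIndepFun X μ) {i₀ : ι} (hid : ∀ i, IdentDistrib (X i) (X i₀) μ μ) :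
    μ.map (fun ω i => X i ω) = Measure.pi fun _ => μ.map (X i₀) := by
  rw [(iIndepFun_iff_map_fun_eq_pi_map fun i => (hid i).aemeasurable_fst).1 hind]
  exact congrArg Measure.pi (funext fun i => (hid i).map_eq)

theorem condExp_comap_comp_ae_eq {Ω E β : Type*} [MeasurableSpace Ω] [MeasurableSpace E]
    [MeasurableSpace β] {μ : Measure Ω} [IsFiniteMeasure μ] {T : Ω → E} {m : E → β}
    {F : E → ℝ} {h : β → ℝ} (hT : Measurable T) (hm : Measurable m) (hF : Measurable F)
    (hFT : Integrable (fun ω => F (T ω)) μ) (hF0 : ∀ x, 0 ≤ F x) (hh : Measurable h)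
    (hh0 : ∀ r, 0 ≤ h r)
    (heq : ∀ t, MeasurableSet t → ∫⁻ x in m ⁻¹' t, ENNReal.ofReal (h (m x)) ∂(μ.map T)
      = ∫⁻ x in m ⁻¹' t, ENNReal.ofReal (F x) ∂(μ.map T)) :
    μ[fun ω => F (T ω) | MeasurableSpace.comap (fun ω => m (T ω)) inferInstance]
      =ᵐ[μ] fun ω => h (m (T ω)) := by
  have hmT : Measurable fun ω => m (T ω) := hm.comp hT
  have hset : ∀ t, MeasurableSet t →
      ∫⁻ ω in (fun ω => m (T ω)) ⁻¹' t, ENNReal.ofReal (h (m (T ω))) ∂μ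
        = ∫⁻ ω in (fun ω => m (T ω)) ⁻¹' t, ENNReal.ofReal (F (T ω)) ∂μ := fun t ht =>
    (setLIntegral_map (hm ht) (hh.comp hm).ennreal_ofReal hT).symm.trans
      ((heq t ht).trans (setLIntegral_map (hm ht) hF.ennreal_ofReal hT))
  have hhmT : Integrable (fun ω => h (m (T ω))) μ := by
    refine ⟨(hh.comp hmT).aestronglyMeasurable,
      (hasFiniteIntegral_iff_ofReal (.of_forall fun _ => hh0 _)).2 ?_⟩
    have huniv := hset univ .univ
    rw [preimage_univ, setLIntegral_univ, setLIntegral_univ] at huniv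
    exact huniv ▸ hFT.lintegral_lt_top
  refine (ae_eq_condExp_of_forall_setIntegral_eq hmT.comap_le hFT
    (fun _ _ _ => hhmT.integrableOn) ?_
    (hh.comp (Measurable.of_comap_le le_rfl)).aestronglyMeasurable).symm
  rintro _ ⟨t, ht, rfl⟩ -
  rw [integral_eq_lintegral_of_nonneg_ae (.of_forall fun _ => hh0 _)
      (hh.comp hmT).aestronglyMeasurable.restrict,
    integral_eq_lintegral_of_nonneg_ae (.of_forall fun _ => hF0 _)
      (hF.comp hT).aestronglyMeasurable.restrict, hset t ht]

section StrictMin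

variable {ι : Type*}

def strictMinAt (i : ι) : Set (ι → ℝ) := {x | ∀ j, j ≠ i → x i < x j}

theorem measurableSet_strictMinAt [Countable ι] (i : ι) : MeasurableSet (strictMinAt i) := by
  simp only [strictMinAt, ofPred_forall]
  exact .iInter fun j => .iInter fun _ =>
    measurableSet_lt (measurable_pi_apply i) (measurable_pi_apply j)

theorem comp_perm_mem_strictMinAt {x : ι → ℝ} (σ : Equiv.Perm ι) (i : ι) :
    x ∘ σ ∈ strictMinAt i ↔ x ∈ strictMinAt (σ i) := by
  simp only [strictMinAt, mem_ofPred_eq, Function.comp_apply]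
  exact σ.forall_congr fun _ => by rw [σ.injective.ne_iff]

theorem pairwise_disjoint_strictMinAt :
    Pairwise (Function.onFun Disjoint (strictMinAt (ι := ι))) :=
  fun i j hij => disjoint_left.2 fun _ hi hj => (hi j hij.symm).asymm (hj i hij)

theorem mem_iUnion_strictMinAt [Finite ι] [Nonempty ι] {x : ι → ℝ} (hx : x.Injective) :
    x ∈ ⋃ i, strictMinAt i := by
  obtain ⟨i, hi⟩ := Finite.exists_min x
  exact mem_iUnion.2 ⟨i, fun j hj => (hi j).lt_of_ne (hx.ne hj.symm)⟩

variable [Fintype ι] (p : Measure ℝ) [IsProbabilityMeasure p] [NullSingletonClass p]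

theorem ae_injective_pi : ∀ᵐ x ∂(Measure.pi fun _ : ι => p), x.Injective := by
  simp only [Function.Injective, ae_all_iff]
  intro i j
  by_cases hij : i = j
  · exact .of_forall fun _ _ => hij
  have hind : IndepFun (fun x : ι → ℝ => x i) (fun x => x j) (Measure.pi fun _ => p) :=
    (iIndepFun_pi (X := fun _ => id) fun _ => aemeasurable_id).indepFun hij
  have hpair : (Measure.pi fun _ : ι => p).map (fun x => (x i, x j)) = p.prod p := by
    rw [(indepFun_iff_map_prod_eq_prod_map_map (measurable_pi_apply i).aemeasurable
      (measurable_pi_apply j).aemeasurable).1 hind, (measurePreserving_eval _ i).map_eq,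
      (measurePreserving_eval _ j).map_eq]
  have hnull := measure_prod_diagonal_eq_zero p p
  rw [← hpair, Measure.map_apply (by fun_prop) measurableSet_diagonal] at hnull
  rw [ae_iff]
  exact measure_mono_null (fun x hx => by simpa [hij] using hx) hnull

theorem lintegral_pi_eq_card_mul_setLIntegral_strictMinAt {Φ : (ι → ℝ) → ℝ≥0∞}
    (hΦ : ∀ (σ : Equiv.Perm ι) x, Φ (x ∘ σ) = Φ x) (i₀ : ι) :
    ∫⁻ x, Φ x ∂(Measure.pi fun _ => p)
      = Fintype.card ι * ∫⁻ x in strictMinAt i₀, Φ x ∂(Measure.pi fun _ => p) := by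
  classical
  have hswap : ∀ i, ∫⁻ x in strictMinAt i, Φ x ∂(Measure.pi fun _ => p)
      = ∫⁻ x in strictMinAt i₀, Φ x ∂(Measure.pi fun _ => p) := by
    intro i
    set e := MeasurableEquiv.arrowCongr' (Equiv.swap i₀ i) (.refl ℝ)
    have he : MeasurePreserving e (Measure.pi fun _ => p) (Measure.pi fun _ => p) :=
      measurePreserving_arrowCongr' _ _ _ _ fun _ => .id p
    have hpre : e ⁻¹' strictMinAt i = strictMinAt i₀ := by
      ext x
      exact (comp_perm_mem_strictMinAt _ i).trans (by simp)
    rw [← he.setLIntegral_comp_preimage_emb e.measurableEmbedding, hpre]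
    exact setLIntegral_congr_fun (measurableSet_strictMinAt i₀) fun x _ => hΦ _ x
  have hcover : (⋃ i, strictMinAt i) =ᵐ[Measure.pi fun _ : ι => p] univ := by
    have : Nonempty ι := ⟨i₀⟩
    exact ae_eq_univ.2 <| ae_iff.1 <| (ae_injective_pi p).mono fun _ => mem_iUnion_strictMinAt
  rw [← setLIntegral_univ, ← setLIntegral_congr hcover,
    lintegral_iUnion measurableSet_strictMinAt pairwise_disjoint_strictMinAt, tsum_fintype]
  simp [hswap]

end StrictMin

section MinAtZero

variable {n : ℕ}

theorem lintegral_pi_fin_succ (p : Measure ℝ) [SigmaFinite p]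
    {k : (Fin (n + 1) → ℝ) → ℝ≥0∞} (hk : Measurable k) :
    ∫⁻ x, k x ∂(Measure.pi fun _ => p)
      = ∫⁻ r, ∫⁻ y, k (Fin.cons r y) ∂(Measure.pi fun _ => p) ∂p := by
  have he := (measurePreserving_piFinSuccAbove (fun _ : Fin (n + 1) => p) 0).symm
  rw [← he.lintegral_comp_emb (MeasurableEquiv.measurableEmbedding _)]
  refine (lintegral_prod _ (hk.comp (MeasurableEquiv.measurable _)).aemeasurable).trans ?_
  simp only [Function.comp_apply, MeasurableEquiv.piFinSuccAbove_symm_apply,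
    Fin.insertNthEquiv_zero]
  rfl

theorem iInf_cons_of_forall_lt {r : ℝ} {y : Fin n → ℝ} (hy : ∀ j, r < y j) :
    ⨅ i, (Fin.cons r y : Fin (n + 1) → ℝ) i = r :=
  le_antisymm (ciInf_le (finite_range _).bddBelow 0)
    (le_ciInf fun i => Fin.cases le_rfl (fun j => (hy j).le) i)

theorem cons_mem_strictMinAt_zero {r : ℝ} {y : Fin n → ℝ} :
    (Fin.cons r y : Fin (n + 1) → ℝ) ∈ strictMinAt 0 ↔ y ∈ univ.pi fun _ => Ioi r := by
  simp [strictMinAt, Fin.forall_fin_succ]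

/-- `tailLIntegral p g r = E[g(r, Y 0, …, Y (n-1)); Y j > r ∀ j]` for `Y j` i.i.d. with law `p`. -/
noncomputable def tailLIntegral (p : Measure ℝ) (g : (Fin (n + 1) → ℝ) → ℝ≥0∞) (r : ℝ) : ℝ≥0∞ :=
  ∫⁻ y in univ.pi fun _ => Ioi r, g (Fin.cons r y) ∂(Measure.pi fun _ => p)

/-- The conditional mean of `g(r, Y 0, …, Y (n-1))` given `Y j > r ∀ j`; this is the paper's `h`,
as `P(Y j > r ∀ j) = G r ^ n`. -/
noncomputable def tailMean (p : Measure ℝ) (g : (Fin (n + 1) → ℝ) → ℝ≥0∞) (r : ℝ) : ℝ :=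
  if 0 < (p (Ioi r)).toReal then (tailLIntegral p g r).toReal / (p (Ioi r)).toReal ^ n else 0

theorem tailMean_nonneg (p : Measure ℝ) (g : (Fin (n + 1) → ℝ) → ℝ≥0∞) (r : ℝ) :
    0 ≤ tailMean p g r := by
  rw [tailMean]
  split_ifs <;> positivity

variable (p : Measure ℝ) [IsProbabilityMeasure p]

theorem measurable_tailLIntegral {g : (Fin (n + 1) → ℝ) → ℝ≥0∞} (hg : Measurable g) :
    Measurable (tailLIntegral p g) := by
  have hs : MeasurableSet {q : ℝ × (Fin n → ℝ) | ∀ j, q.1 < q.2 j} := by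
    simp only [ofPred_forall]
    exact .iInter fun j =>
      measurableSet_lt measurable_fst ((measurable_pi_apply j).comp measurable_snd)
  have hcons : Measurable fun q : ℝ × (Fin n → ℝ) => (Fin.cons q.1 q.2 : Fin (n + 1) → ℝ) :=
    measurable_pi_lambda _ fun i => by cases i using Fin.cases <;> simp <;> fun_prop
  convert ((hg.comp hcons).indicator hs).lintegral_prod_right' (ν := Measure.pi fun _ => p)
    using 1
  funext r
  rw [tailLIntegral, ← lintegral_indicator (.univ_pi fun _ => measurableSet_Ioi)]
  congr 1 with y
  classical
  simp [indicator_apply]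

theorem tailLIntegral_le {g : (Fin (n + 1) → ℝ) → ℝ≥0∞} {c : ℝ≥0∞} (hg : ∀ x, g x ≤ c)
    (r : ℝ) : tailLIntegral p g r ≤ c :=
  (setLIntegral_le_lintegral _ _).trans ((lintegral_mono fun _ => hg _).trans_eq (by simp))

theorem tailLIntegral_comp_iInf (φ : ℝ → ℝ≥0∞) (r : ℝ) :
    tailLIntegral (n := n) p (fun x => φ (⨅ i, x i)) r = φ r * p (Ioi r) ^ n := by
  rw [tailLIntegral, setLIntegral_congr_fun (.univ_pi fun _ => measurableSet_Ioi)
    fun y hy => by rw [iInf_cons_of_forall_lt (by simpa using hy)], setLIntegral_const,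
    Measure.pi_pi]
  simp

theorem setLIntegral_strictMinAt_zero {k : (Fin (n + 1) → ℝ) → ℝ≥0∞} (hk : Measurable k) :
    ∫⁻ x in strictMinAt 0, k x ∂(Measure.pi fun _ => p) = ∫⁻ r, tailLIntegral p k r ∂p := by
  rw [← lintegral_indicator (measurableSet_strictMinAt 0),
    lintegral_pi_fin_succ p (hk.indicator (measurableSet_strictMinAt 0))]
  refine lintegral_congr fun r => ?_
  rw [tailLIntegral, ← lintegral_indicator (.univ_pi fun _ => measurableSet_Ioi)]
  congr 1 with y
  classical
  simp only [indicator_apply, cons_mem_strictMinAt_zero]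

theorem setLIntegral_preimage_iInf [NullSingletonClass p] {g : (Fin (n + 1) → ℝ) → ℝ≥0∞}
    (hg : Measurable g) (hsymm : ∀ (σ : Equiv.Perm (Fin (n + 1))) x, g (x ∘ σ) = g x)
    {t : Set ℝ} (ht : MeasurableSet t) :
    ∫⁻ x in (fun x => ⨅ i, x i) ⁻¹' t, g x ∂(Measure.pi fun _ => p)
      = (n + 1) * ∫⁻ r in t, tailLIntegral p g r ∂p := by
  have hmin : Measurable fun x : Fin (n + 1) → ℝ => ⨅ i, x i := .iInf measurable_pi_apply
  have hsymm' : ∀ (σ : Equiv.Perm (Fin (n + 1))) x,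
      ((fun x => ⨅ i, x i) ⁻¹' t).indicator g (x ∘ σ)
        = ((fun x => ⨅ i, x i) ⁻¹' t).indicator g x := fun σ x => by
    classical
    simp only [indicator_apply, mem_preimage, Function.comp_apply, σ.iInf_comp, hsymm]
  rw [← lintegral_indicator (hmin ht),
    lintegral_pi_eq_card_mul_setLIntegral_strictMinAt p hsymm' 0,
    setLIntegral_strictMinAt_zero p (hg.indicator (hmin ht)), ← lintegral_indicator ht,
    Fintype.card_fin, Nat.cast_add_one]
  congr 2 with r
  simp only [tailLIntegral]
  by_cases hr : r ∈ t
  · rw [indicator_of_mem hr]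
    refine setLIntegral_congr_fun (.univ_pi fun _ => measurableSet_Ioi) fun y hy => ?_
    rw [indicator_of_mem (by simpa [iInf_cons_of_forall_lt (by simpa using hy)] using hr)]
  · rw [indicator_of_notMem hr]
    refine (setLIntegral_congr_fun (.univ_pi fun _ => measurableSet_Ioi) fun y hy => ?_).trans
      lintegral_zero
    rw [indicator_of_notMem (by simpa [iInf_cons_of_forall_lt (by simpa using hy)] using hr)]

theorem measurable_tailMean {g : (Fin (n + 1) → ℝ) → ℝ≥0∞} (hg : Measurable g) :
    Measurable (tailMean p g) := by
  have hG : Measurable fun r => (p (Ioi r)).toReal :=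
    (Antitone.measurable fun _ _ hab => measure_mono (Ioi_subset_Ioi hab)).ennreal_toReal
  exact .ite (measurableSet_lt measurable_const hG)
    ((measurable_tailLIntegral p hg).ennreal_toReal.div (hG.pow_const n)) measurable_const

theorem ae_ofReal_tailMean_mul [NullSingletonClass p] {g : (Fin (n + 1) → ℝ) → ℝ≥0∞}
    (hg : ∀ r, tailLIntegral p g r ≠ ∞) :
    ∀ᵐ r ∂p, ENNReal.ofReal (tailMean p g r) * p (Ioi r) ^ n = tailLIntegral p g r := by
  filter_upwards [ae_measure_Ioi_ne_zero p] with r hr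
  rw [tailMean, if_pos (ENNReal.toReal_pos hr (measure_ne_top _ _)), ← ENNReal.toReal_pow,
    ← ENNReal.toReal_div, ENNReal.ofReal_toReal (ENNReal.div_ne_top (hg r) (pow_ne_zero _ hr)),
    ENNReal.div_mul_cancel (pow_ne_zero _ hr) (ENNReal.pow_ne_top (measure_ne_top _ _))]

theorem integral_eq_toReal_tailLIntegral {Ω : Type*} [MeasurableSpace Ω] {μ : Measure Ω}
    {R : Fin (n + 1) → Ω → ℝ} (hR : ∀ i, Measurable (R i))
    (hlaw : μ.map (fun ω i => R i ω) = Measure.pi fun _ => p)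
    {F : (Fin (n + 1) → ℝ) → ℝ} (hF : Measurable F) (hF0 : ∀ x, 0 ≤ F x) (r : ℝ) :
    ∫ ω, F (fun i => if i = 0 then r else R i ω) *
        ∏ j ∈ Finset.univ.erase 0, (if r < R j ω then (1 : ℝ) else 0) ∂μ
      = (tailLIntegral p (fun x => ENNReal.ofReal (F x)) r).toReal := by
  set f : (Fin (n + 1) → ℝ) → ℝ := fun x =>
    F (Function.update x 0 r) * ∏ j ∈ Finset.univ.erase 0, (if r < x j then (1 : ℝ) else 0)
  have hf : Measurable f :=
    (hF.comp measurable_update_left).mul (Finset.measurable_prod _ fun j _ =>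
      Measurable.ite (measurableSet_lt measurable_const (measurable_pi_apply j))
        measurable_const measurable_const)
  have hf0 : ∀ x, 0 ≤ f x := fun x =>
    mul_nonneg (hF0 _) (Finset.prod_nonneg fun j _ => by split_ifs <;> norm_num)
  have hcons : ∀ r' y, ENNReal.ofReal (f (Fin.cons r' y))
      = (univ.pi fun _ => Ioi r).indicator (fun y => ENNReal.ofReal (F (Fin.cons r y))) y := by
    intro r' y
    classical
    simp [f, Fin.update_cons_zero, Finset.prod_boole, indicator_apply, Fin.forall_fin_succ,
      apply_ite ENNReal.ofReal]
  calc ∫ ω, F (fun i => if i = 0 then r else R i ω) *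
        ∏ j ∈ Finset.univ.erase 0, (if r < R j ω then (1 : ℝ) else 0) ∂μ
      = ∫ x, f x ∂(μ.map fun ω i => R i ω) := by
        rw [integral_map (measurable_pi_lambda _ hR).aemeasurable hf.aestronglyMeasurable]
        congr with ω
        simp only [f]
        congr 2 with i
        rw [Function.update_apply]
    _ = (∫⁻ r', ∫⁻ y, ENNReal.ofReal (f (Fin.cons r' y)) ∂(Measure.pi fun _ => p) ∂p).toReal := by
        rw [hlaw, integral_eq_lintegral_of_nonneg_ae (.of_forall hf0) hf.aestronglyMeasurable,
          lintegral_pi_fin_succ p hf.ennreal_ofReal]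
    _ = _ := by
        simp only [hcons, tailLIntegral, lintegral_indicator (.univ_pi fun _ => measurableSet_Ioi),
          lintegral_const, measure_univ, mul_one]

end MinAtZero

theorem condExp_iInf_ae_eq_tailMean {n : ℕ} (p : Measure ℝ) [IsProbabilityMeasure p]
    [NullSingletonClass p] {Ω : Type*} [MeasurableSpace Ω] {μ : Measure Ω} [IsFiniteMeasure μ]
    {R : Fin (n + 1) → Ω → ℝ} (hR : ∀ i, Measurable (R i))
    (hlaw : μ.map (fun ω i => R i ω) = Measure.pi fun _ => p)
    {F : (Fin (n + 1) → ℝ) → ℝ} (hF : Measurable F) (hF0 : ∀ x, 0 ≤ F x) {C : ℝ}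
    (hC : ∀ x, F x ≤ C) (hsymm : ∀ (σ : Equiv.Perm (Fin (n + 1))) x, F (x ∘ σ) = F x) :
    μ[fun ω => F (fun i => R i ω) | MeasurableSpace.comap (fun ω => ⨅ i, R i ω) inferInstance]
      =ᵐ[μ] fun ω => tailMean p (fun x => ENNReal.ofReal (F x)) (⨅ i, R i ω) := by
  set F' := fun x => ENNReal.ofReal (F x)
  have hF' : ∀ r, tailLIntegral p F' r ≠ ∞ := fun r =>
    ((tailLIntegral_le p (fun x => ENNReal.ofReal_le_ofReal (hC x)) r).trans_lt
      ENNReal.ofReal_lt_top).ne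
  have hFR : Integrable (fun ω => F (fun i => R i ω)) μ :=
    .of_bound (hF.comp (measurable_pi_lambda _ hR)).aestronglyMeasurable C
      (.of_forall fun ω => by rw [Real.norm_of_nonneg (hF0 _)]; exact hC _)
  have hmean := measurable_tailMean p hF.ennreal_ofReal
  refine condExp_comap_comp_ae_eq (T := fun ω i => R i ω) (m := fun x => ⨅ i, x i)
    (measurable_pi_lambda _ hR) (.iInf measurable_pi_apply) hF hFR hF0 hmean
    (tailMean_nonneg p F') fun t ht => ?_
  rw [hlaw,
    setLIntegral_preimage_iInf p (g := fun x => ENNReal.ofReal (tailMean p F' (⨅ i, x i)))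
      (hmean.comp (.iInf measurable_pi_apply)).ennreal_ofReal
      (fun σ x => by simp only [Function.comp_apply, σ.iInf_comp]) ht,
    setLIntegral_preimage_iInf p hF.ennreal_ofReal (fun σ x => by simp only [hsymm]) ht]
  congr 1
  refine setLIntegral_congr_fun_ae ht ((ae_ofReal_tailMean_mul p hF').mono fun r hr _ => ?_)
  rw [tailLIntegral_comp_iInf p (fun r => ENNReal.ofReal (tailMean p F' r)), hr]

theorem stmt17_general {Ω : Type*} [MeasurableSpace Ω] (μ : Measure Ω) [IsProbabilityMeasure μ]
    (M : ℕ) [NeZero M] (R : Fin M → Ω → ℝ)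
    (hRmeas : ∀ i, Measurable (R i))
    (hindep : iIndepFun R μ)
    (hident : ∀ i, IdentDistrib (R i) (R 0) μ μ)
    (hatomless : ∀ x : ℝ, μ {ω | R 0 ω = x} = 0)
    (F : (Fin M → ℝ) → ℝ) (hFmeas : Measurable F)
    (hFnonneg : ∀ x, 0 ≤ F x) (hFbdd : ∃ C : ℝ, ∀ x, F x ≤ C)
    (hFsymm : ∀ (σ : Equiv.Perm (Fin M)) (x : Fin M → ℝ), F (x ∘ σ) = F x)
    (G : ℝ → ℝ) (hG : ∀ r, G r = (μ {ω | r < R 0 ω}).toReal)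
    (h : ℝ → ℝ)
    (hh : ∀ r : ℝ, h r =
      if 0 < G r then
        (∫ ω, F (fun i => if i = 0 then r else R i ω) *
            ∏ j ∈ Finset.univ.erase (0 : Fin M),
              (if r < R j ω then (1:ℝ) else 0) ∂μ) / G r ^ (M - 1)
      else 0) :
    μ[(fun ω => F (fun i => R i ω)) |
        MeasurableSpace.comap (fun ω => ⨅ i, R i ω) (inferInstance : MeasurableSpace ℝ)]
      =ᵐ[μ] fun ω => h (⨅ i, R i ω) := by
  obtain ⟨n, rfl⟩ := Nat.exists_eq_add_one_of_ne_zero (NeZero.ne M)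
  obtain ⟨C, hC⟩ := hFbdd
  set p := μ.map (R 0)
  have : IsProbabilityMeasure p := Measure.isProbabilityMeasure_map (hRmeas 0).aemeasurable
  have : NullSingletonClass p := ⟨fun x => by
    rw [Measure.map_apply (hRmeas 0) (measurableSet_singleton x)]; exact hatomless x⟩
  have hlaw : μ.map (fun ω i => R i ω) = Measure.pi fun _ => p :=
    hindep.map_eq_pi_of_identDistrib hident
  have hG' : ∀ r, G r = (p (Ioi r)).toReal := fun r => by
    rw [hG, Measure.map_apply (hRmeas 0) measurableSet_Ioi]; rfl
  have hh' : h = tailMean p fun x => ENNReal.ofReal (F x) := funext fun r => by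
    rw [hh, hG', integral_eq_toReal_tailLIntegral p hRmeas hlaw hFmeas hFnonneg,
      Nat.add_sub_cancel, tailMean]
  rw [hh']
  exact condExp_iInf_ae_eq_tailMean p hRmeas hlaw hFmeas hFnonneg hC hFsymm

/-- Corollary 1: for i.i.d. nonnegative random variables `R 0, …, R (M-1)` with atomless
common distribution and CCDF `G`, and a bounded measurable symmetric function `F`, the
conditional expectation of `F(R)` given `min_i R i` is `h(min_i R i)`, where
`h(r) = E[F(r, R_1, …, R_{M-1}) ∏_{j≠0} 1_{R j > r}]/G(r)^{M-1}` when `G(r) > 0`. -/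
theorem stmt17 {Ω : Type*} [MeasurableSpace Ω] (μ : Measure Ω) [IsProbabilityMeasure μ]
    (M : ℕ) [NeZero M] (hM : 1 ≤ M) (R : Fin M → Ω → ℝ)
    (hRmeas : ∀ i, Measurable (R i))
    (hRnonneg : ∀ i ω, 0 ≤ R i ω)
    (hindep : iIndepFun R μ)
    (hident : ∀ i, IdentDistrib (R i) (R 0) μ μ)
    (hatomless : ∀ x : ℝ, μ {ω | R 0 ω = x} = 0)
    (F : (Fin M → ℝ) → ℝ) (hFmeas : Measurable F)
    (hFnonneg : ∀ x, 0 ≤ F x) (hFbdd : ∃ C : ℝ, ∀ x, F x ≤ C)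
    (hFsymm : ∀ (σ : Equiv.Perm (Fin M)) (x : Fin M → ℝ), F (x ∘ σ) = F x)
    (G : ℝ → ℝ) (hG : ∀ r, G r = (μ {ω | r < R 0 ω}).toReal)
    (h : ℝ → ℝ)
    (hh : ∀ r : ℝ, h r =
      if 0 < G r then
        (∫ ω, F (fun i => if i = 0 then r else R i ω) *
            ∏ j ∈ Finset.univ.erase (0 : Fin M),
              (if r < R j ω then (1:ℝ) else 0) ∂μ) / G r ^ (M - 1)
      else 0) :
    μ[(fun ω => F (fun i => R i ω)) |
        MeasurableSpace.comap (fun ω => ⨅ i, R i ω) (inferInstance : MeasurableSpace ℝ)]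
      =ᵐ[μ] fun ω => h (⨅ i, R i ω) :=
  stmt17_general μ M R hRmeas hindep hident hatomless F hFmeas hFnonneg hFbdd hFsymm G hG h hh
end

section
/- Let λ > 0, Γ > 0, α > 2, let M be a positive integer, and let R₀ ≥ 0. Set H(k) = ∫_{1}^{∞} (1 − (1 + Γ/r^α)^{−k}) r dr for integers k ≥ 0 and f_j(r) = ∑_{k=0}^{j} (−1)^k binom(j,k) · exp(−2πλ r² H(k)/M) for integers j ≥ 0 and r ≥ 0. Then for every integer j ≥ 0: (i) ∫_{R₀}^{∞} f_j(r) · (2λπ r/M) · exp(−λπ r²/M) dr = ∑_{k=0}^{j} (−1)^k binom(j,k) · exp(−(λπ/M)(1 + 2H(k)) R₀²) / (1 + 2H(k)); and consequently (ii) f_j(R₀) · ( ∫_{R₀}^{∞} f_j(r) (2λπ r/M) exp(−λπ r²/M) dr )^{M−1} · exp(λπ(M−1)R₀²/M) = [ ∑_{k=0}^{j} (−1)^k binom(j,k) exp(−2πλ R₀² H(k)/M) ] · [ ∑_{k=0}^{j} (−1)^k binom(j,k) exp(−2πλ R₀² H(k)/M) / (1 + 2H(k)) ]^{M−1}. -/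
/-!
Every term of `f_j` is a Gaussian `exp (-2 d H(k) r²)` with `d = λπ/M`, so against the
nearest-distance density `2 d r exp (-d r²)` it becomes `r exp (-d (1 + 2 H(k)) r²)`, whose
tail integral from `R₀` is elementary; `H(k) ≥ 0` keeps the rate positive. For (ii), the factor
`exp (λπ(M - 1)R₀²/M) = exp (d R₀²)^(M - 1)` cancels the extra `exp (-d R₀²)` in each term of (i).
-/

open MeasureTheory Set Filter Real
open scoped Topology

theorem integral_Ioi_mul_exp_neg_mul_sq_s18 {c : ℝ} (hc : 0 < c) (R : ℝ) :
    ∫ r in Ioi R, r * exp (-c * r ^ 2) = exp (-c * R ^ 2) / (2 * c) := by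
  have hderiv (x : ℝ) :
      HasDerivAt (fun r => -exp (-c * r ^ 2) / (2 * c)) (x * exp (-c * x ^ 2)) x := by
    refine ((((hasDerivAt_pow 2 x).const_mul (-c)).exp.fun_neg).div_const (2 * c)).congr_deriv ?_
    field_simp
    ring
  have hlim : Tendsto (fun r => -exp (-c * r ^ 2) / (2 * c)) atTop (𝓝 0) := by
    have hsq : Tendsto (fun r : ℝ => -c * r ^ 2) atTop atBot :=
      (tendsto_pow_atTop two_ne_zero).const_mul_atTop_of_neg (neg_neg_of_pos hc)
    simpa using ((tendsto_exp_atBot.comp hsq).neg.div_const (2 * c))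
  rw [integral_Ioi_of_hasDerivAt_of_tendsto' (fun x _ => hderiv x)
    (integrable_mul_exp_neg_mul_sq hc).integrableOn hlim]
  ring

theorem integral_Ioi_one_sub_inv_one_add_div_rpow_pow_mul_nonneg {γ : ℝ} (hγ : 0 ≤ γ)
    (α : ℝ) (k : ℕ) : 0 ≤ ∫ r in Ioi (1 : ℝ), (1 - ((1 + γ / r ^ α) ^ k)⁻¹) * r := by
  refine setIntegral_nonneg measurableSet_Ioi fun r (hr : 1 < r) => ?_
  have hbase : 1 ≤ 1 + γ / r ^ α :=
    le_add_of_nonneg_right (div_nonneg hγ (rpow_nonneg (by linarith) α))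
  have hinv : ((1 + γ / r ^ α) ^ k)⁻¹ ≤ 1 := inv_le_one_of_one_le₀ (one_le_pow₀ hbase)
  exact mul_nonneg (sub_nonneg.mpr hinv) (by linarith)

theorem integral_Ioi_sum_exp_mul_rayleigh {ι : Type*} (s : Finset ι) (a h : ι → ℝ)
    {d : ℝ} (hd : 0 < d) (hh : ∀ k ∈ s, 0 < 1 + 2 * h k) (R : ℝ) :
    ∫ r in Ioi R, (∑ k ∈ s, a k * exp (-(2 * d * r ^ 2 * h k))) * (2 * d * r) * exp (-(d * r ^ 2))
      = ∑ k ∈ s, a k * exp (-d * (1 + 2 * h k) * R ^ 2) / (1 + 2 * h k) := by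
  have hc : ∀ k ∈ s, 0 < d * (1 + 2 * h k) := fun k hk => mul_pos hd (hh k hk)
  have hterm (r : ℝ) :
      (∑ k ∈ s, a k * exp (-(2 * d * r ^ 2 * h k))) * (2 * d * r) * exp (-(d * r ^ 2))
        = ∑ k ∈ s, 2 * d * a k * (r * exp (-(d * (1 + 2 * h k)) * r ^ 2)) := by
    rw [Finset.sum_mul, Finset.sum_mul]
    refine Finset.sum_congr rfl fun k _ => ?_
    have hexp : exp (-(2 * d * r ^ 2 * h k)) * exp (-(d * r ^ 2))
        = exp (-(d * (1 + 2 * h k)) * r ^ 2) := by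
      rw [← exp_add]
      ring_nf
    linear_combination (2 * d * a k * r) * hexp
  simp_rw [hterm]
  rw [integral_finsetSum _ fun k hk =>
    (integrable_mul_exp_neg_mul_sq (hc k hk)).integrableOn.const_mul _]
  refine Finset.sum_congr rfl fun k hk => ?_
  rw [integral_const_mul, integral_Ioi_mul_exp_neg_mul_sq_s18 (hc k hk)]
  field_simp [(hh k hk).ne', hd.ne']

theorem sum_exp_div_mul_exp {ι : Type*} (s : Finset ι) (a h : ι → ℝ) (d R : ℝ) :
    (∑ k ∈ s, a k * exp (-d * (1 + 2 * h k) * R ^ 2) / (1 + 2 * h k)) * exp (d * R ^ 2)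
      = ∑ k ∈ s, a k * exp (-(2 * d * R ^ 2 * h k)) / (1 + 2 * h k) := by
  rw [Finset.sum_mul]
  refine Finset.sum_congr rfl fun k _ => ?_
  rw [mul_div_right_comm, mul_assoc, ← exp_add]
  ring_nf

theorem stmt18_general (lam gam α : ℝ) (M : ℕ) (R₀ : ℝ)
    (hlam : 0 < lam) (hgam : 0 < gam) (hM : 0 < M)
    (H : ℕ → ℝ)
    (hH : ∀ k : ℕ, H k = ∫ r in Set.Ioi (1:ℝ), (1 - ((1 + gam / r ^ α) ^ k)⁻¹) * r)
    (f : ℕ → ℝ → ℝ)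
    (hf : ∀ (j : ℕ) (r : ℝ), f j r =
      ∑ k ∈ Finset.range (j + 1), (-1 : ℝ) ^ k * (j.choose k) *
        Real.exp (-(2 * π * lam * r ^ 2 * H k / M))) :
    ∀ j : ℕ,
      (∫ r in Set.Ioi R₀, f j r * (2 * lam * π * r / M) * Real.exp (-(lam * π * r ^ 2 / M))
          = ∑ k ∈ Finset.range (j + 1), (-1 : ℝ) ^ k * (j.choose k) *
              Real.exp (-(lam * π / M) * (1 + 2 * H k) * R₀ ^ 2) / (1 + 2 * H k)) ∧
      (f j R₀ *
          (∫ r in Set.Ioi R₀,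
            f j r * (2 * lam * π * r / M) * Real.exp (-(lam * π * r ^ 2 / M))) ^ (M - 1) *
          Real.exp (lam * π * (M - 1) * R₀ ^ 2 / M)
        = (∑ k ∈ Finset.range (j + 1), (-1 : ℝ) ^ k * (j.choose k) *
            Real.exp (-(2 * π * lam * R₀ ^ 2 * H k / M))) *
          (∑ k ∈ Finset.range (j + 1), (-1 : ℝ) ^ k * (j.choose k) *
            Real.exp (-(2 * π * lam * R₀ ^ 2 * H k / M)) / (1 + 2 * H k)) ^ (M - 1)) := by
  intro j
  have hd : 0 < lam * π / M := by positivity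
  have hrate (k : ℕ) : 0 < 1 + 2 * H k := by
    linarith [hH k ▸ integral_Ioi_one_sub_inv_one_add_div_rpow_pow_mul_nonneg hgam.le α k]
  have hsector := integral_Ioi_sum_exp_mul_rayleigh (Finset.range (j + 1))
    (fun k => (-1 : ℝ) ^ k * (j.choose k)) H hd (fun k _ => hrate k) R₀
  have hfactor := sum_exp_div_mul_exp (Finset.range (j + 1))
    (fun k => (-1 : ℝ) ^ k * (j.choose k)) H (lam * π / M) R₀
  have hpow : exp (lam * π * (M - 1) * R₀ ^ 2 / M) = exp (lam * π / M * R₀ ^ 2) ^ (M - 1) := by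
    rw [← exp_nat_mul, Nat.cast_sub hM]
    ring_nf
  have hintegral : ∫ r in Ioi R₀, f j r * (2 * lam * π * r / M) * exp (-(lam * π * r ^ 2 / M))
      = ∑ k ∈ Finset.range (j + 1), (-1 : ℝ) ^ k * (j.choose k) *
          exp (-(lam * π / M) * (1 + 2 * H k) * R₀ ^ 2) / (1 + 2 * H k) := by
    simp only [hf]
    convert hsector using 10 <;> ring
  refine ⟨hintegral, ?_⟩
  rw [hintegral, hpow, mul_assoc, ← mul_pow, hfactor, hf]
  congr! 6
  ring

/-- Corollary 3: the explicit form of the conditional mean number of IA cycles given the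
nearest-BS distance `R₀` in the interference-limited network: (i) the sector integral of
`f_j` against the nearest-BS density, and consequently (ii) the summand of
`L_cs(R₀, M, λ)`. -/
theorem stmt18 (lam gam α : ℝ) (M : ℕ) (R₀ : ℝ)
    (hlam : 0 < lam) (hgam : 0 < gam) (hα : 2 < α) (hM : 0 < M) (hR₀ : 0 ≤ R₀)
    (H : ℕ → ℝ)
    (hH : ∀ k : ℕ, H k = ∫ r in Set.Ioi (1:ℝ), (1 - ((1 + gam / r ^ α) ^ k)⁻¹) * r)
    (f : ℕ → ℝ → ℝ)
    (hf : ∀ (j : ℕ) (r : ℝ), f j r =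
      ∑ k ∈ Finset.range (j + 1), (-1 : ℝ) ^ k * (j.choose k) *
        Real.exp (-(2 * π * lam * r ^ 2 * H k / M))) :
    ∀ j : ℕ,
      (∫ r in Set.Ioi R₀, f j r * (2 * lam * π * r / M) * Real.exp (-(lam * π * r ^ 2 / M))
          = ∑ k ∈ Finset.range (j + 1), (-1 : ℝ) ^ k * (j.choose k) *
              Real.exp (-(lam * π / M) * (1 + 2 * H k) * R₀ ^ 2) / (1 + 2 * H k)) ∧
      (f j R₀ *
          (∫ r in Set.Ioi R₀,
            f j r * (2 * lam * π * r / M) * Real.exp (-(lam * π * r ^ 2 / M))) ^ (M - 1) *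
          Real.exp (lam * π * (M - 1) * R₀ ^ 2 / M)
        = (∑ k ∈ Finset.range (j + 1), (-1 : ℝ) ^ k * (j.choose k) *
            Real.exp (-(2 * π * lam * R₀ ^ 2 * H k / M))) *
          (∑ k ∈ Finset.range (j + 1), (-1 : ℝ) ^ k * (j.choose k) *
            Real.exp (-(2 * π * lam * R₀ ^ 2 * H k / M)) / (1 + 2 * H k)) ^ (M - 1)) :=
  stmt18_general lam gam α M R₀ hlam hgam hM H hH f hf
end
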